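/- arXiv:2408.14675 — 4 statements merged into one kernel-verified Lean document; each statement's English description precedes it below -/
import Mathlib

section
/- Let M be a compact definable C^2 submanifold of ℝ^n of dimension d (definable in a d-minimal expansion of the real ordered field), and let C ⊆ M be a compact definable subset that is contained in a subset U of M which is a definable C^2 multi-valued graph with respect to some coordinate projection π : ℝ^n → ℝ^d. Then the set {f ∈ D^2(M) : every critical point of f lying in C is nondegenerate} is open in D^2(M) with respect to the definable C^2 topology. -/
open FirstOrder Filter Topology

namespace DMorse

/-- A subset of `ℝ^n` is definable with parameters from `ℝ` in the `L`-structure `ℝ`. -/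
def Def (L : FirstOrder.Language) [L.Structure ℝ] (n : ℕ) (s : Set (Fin n → ℝ)) : Prop :=
  Set.Definable (Set.univ : Set ℝ) L s

/-- The `L`-structure on `ℝ` expands the real ordered field: the graphs of addition and
multiplication and the order relation are definable. -/
def ExpandsRealOrderedField (L : FirstOrder.Language) [L.Structure ℝ] : Prop :=
  Def L 3 {v | v 0 + v 1 = v 2} ∧ Def L 3 {v | v 0 * v 1 = v 2} ∧ Def L 2 {v | v 0 < v 1}

/-- A discrete subset of `ℝ`: every point is isolated. -/
def DiscreteSubset (s : Set ℝ) : Prop :=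
  ∀ x ∈ s, ∃ ε > (0 : ℝ), ∀ y ∈ s, |y - x| < ε → y = x

/-- d-minimality: for every definable `A ⊆ ℝ^(m+1)` there is `N` such that each fiber either has
nonempty interior or is a union of at most `N` discrete sets. -/
def DMinimal (L : FirstOrder.Language) [L.Structure ℝ] : Prop :=
  ∀ (m : ℕ) (A : Set (Fin (m + 1) → ℝ)), Def L (m + 1) A →
    ∃ N : ℕ, ∀ x : Fin m → ℝ,
      (interior {y : ℝ | Fin.snoc x y ∈ A}).Nonempty ∨
      ∃ t : Fin N → Set ℝ, {y : ℝ | Fin.snoc x y ∈ A} = ⋃ i, t i ∧ ∀ i, DiscreteSubset (t i)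

/-- `f` is a `C^r` map on `S` (`C^0` meaning continuous; for `r ≥ 1` it locally extends to
ambient `C^r` maps, which for a `C^r` submanifold `S` is equivalent to being `C^r` in charts). -/
def CrOn {E F : Type*} [NormedAddCommGroup E] [NormedSpace ℝ E]
    [NormedAddCommGroup F] [NormedSpace ℝ F] (r : ℕ) (S : Set E) (f : E → F) : Prop :=
  ContinuousOn f S ∧
  (1 ≤ r → ∀ x ∈ S, ∃ U : Set E, IsOpen U ∧ x ∈ U ∧
    ∃ g : E → F, ContDiffOn ℝ r g U ∧ Set.EqOn g f (S ∩ U))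

/-- The graph of a real-valued function on `M ⊆ ℝ^n`, as a subset of `ℝ^(n+1)`. -/
def graphFun (n : ℕ) (M : Set (Fin n → ℝ)) (f : (Fin n → ℝ) → ℝ) : Set (Fin (n + 1) → ℝ) :=
  {v | (fun i : Fin n => v i.castSucc) ∈ M ∧ v (Fin.last n) = f fun i : Fin n => v i.castSucc}

/-- A function `M → ℝ` is definable if its graph is definable. -/
def DefFun (L : FirstOrder.Language) [L.Structure ℝ] (n : ℕ) (M : Set (Fin n → ℝ))
    (f : (Fin n → ℝ) → ℝ) : Prop :=
  Def L (n + 1) (graphFun n M f)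

/-- The graph of a map `S → ℝ^k`, `S ⊆ ℝ^m`, as a subset of `ℝ^(m+k)`. -/
def graphMap (m k : ℕ) (S : Set (Fin m → ℝ)) (f : (Fin m → ℝ) → Fin k → ℝ) :
    Set (Fin (m + k) → ℝ) :=
  {v | (fun i : Fin m => v (Fin.castAdd k i)) ∈ S ∧
       (fun j : Fin k => v (Fin.natAdd m j)) = f fun i : Fin m => v (Fin.castAdd k i)}

/-- A map `S → ℝ^k` is definable if its graph is definable. -/
def DefMap (L : FirstOrder.Language) [L.Structure ℝ] (m k : ℕ) (S : Set (Fin m → ℝ))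
    (f : (Fin m → ℝ) → Fin k → ℝ) : Prop :=
  Def L (m + k) (graphMap m k S f)

/-- `Z` is a `C^r` submanifold of `ℝ^n` of dimension `k`: every point of `Z` has an ambient open
neighborhood `U` and a `C^r` diffeomorphism `φ : U → V` with `φ z = 0` flattening `Z` onto
`ℝ^k × {0}`. -/
def IsCrSubmanifold (r n k : ℕ) (Z : Set (Fin n → ℝ)) : Prop :=
  ∀ z ∈ Z, ∃ (U V : Set (Fin n → ℝ)) (φ ψ : (Fin n → ℝ) → Fin n → ℝ),
    IsOpen U ∧ z ∈ U ∧ IsOpen V ∧ ContDiffOn ℝ r φ U ∧ ContDiffOn ℝ r ψ V ∧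
    Set.MapsTo φ U V ∧ Set.MapsTo ψ V U ∧
    (∀ x ∈ U, ψ (φ x) = x) ∧ (∀ y ∈ V, φ (ψ y) = y) ∧
    φ z = 0 ∧ Z ∩ U = U ∩ φ ⁻¹' {y : Fin n → ℝ | ∀ i : Fin n, k ≤ (i : ℕ) → y i = 0}

/-- A definable `C^r` submanifold of `ℝ^n` of dimension `k`. -/
def IsDefCrSubmanifold (L : FirstOrder.Language) [L.Structure ℝ] (r n k : ℕ)
    (Z : Set (Fin n → ℝ)) : Prop :=
  Def L n Z ∧ IsCrSubmanifold r n k Z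

/-- Velocity vectors at `x` of differentiable curves passing through `x` inside `M`. -/
def curveDerivs (n : ℕ) (M : Set (Fin n → ℝ)) (x : Fin n → ℝ) : Set (Fin n → ℝ) :=
  {v | ∃ γ : ℝ → Fin n → ℝ, γ 0 = x ∧ (∀ᶠ t in 𝓝 (0 : ℝ), γ t ∈ M) ∧ HasDerivAt γ v 0}

/-- The tangent space of `M` at `x` (the span of velocity vectors of curves in `M` through `x`;
for a `C^1` submanifold this is the usual tangent space). -/
def TangentAt (n : ℕ) (M : Set (Fin n → ℝ)) (x : Fin n → ℝ) : Submodule ℝ (Fin n → ℝ) :=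
  Submodule.span ℝ (curveDerivs n M x)

/-- The euclidean inner product on `ℝ^n`. -/
def dot {n : ℕ} (u v : Fin n → ℝ) : ℝ := ∑ i, u i * v i

/-- `p` is the orthogonal projection of `v` onto the subspace `T`. -/
def IsOrthProjOnto {n : ℕ} (T : Submodule ℝ (Fin n → ℝ)) (v p : Fin n → ℝ) : Prop :=
  p ∈ T ∧ ∀ w ∈ T, dot (v - p) w = 0

/-- `c` is the derivative of `g` at `x` along the (tangent) vector `v`, computed along a curve
inside `M`. -/
def HasDerivAlong (n : ℕ) (M : Set (Fin n → ℝ)) (g : (Fin n → ℝ) → ℝ) (x v : Fin n → ℝ)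
    (c : ℝ) : Prop :=
  ∃ γ : ℝ → Fin n → ℝ, γ 0 = x ∧ (∀ᶠ t in 𝓝 (0 : ℝ), γ t ∈ M) ∧ HasDerivAt γ v 0 ∧
    HasDerivAt (g ∘ γ) c 0

/-- `D` is the function `D_j g` on `M`: at each `x ∈ M` its value is the derivative of `g` along
the orthogonal projection of the `j`-th standard basis vector onto the tangent space `T_x M`. -/
def IsDerivField (n : ℕ) (M : Set (Fin n → ℝ)) (g : (Fin n → ℝ) → ℝ) (j : Fin n)
    (D : (Fin n → ℝ) → ℝ) : Prop :=
  ∀ x ∈ M, ∀ p : Fin n → ℝ, IsOrthProjOnto (TangentAt n M x) (Pi.single j 1) p →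
    HasDerivAlong n M g x p (D x)

/-- `x` is a critical point of `f : M → ℝ`: the differential of `f` at `x` vanishes on `T_x M`,
i.e. the derivative of `f` along every differentiable curve in `M` through `x` vanishes. -/
def IsCriticalPt (n : ℕ) (M : Set (Fin n → ℝ)) (f : (Fin n → ℝ) → ℝ) (x : Fin n → ℝ) : Prop :=
  x ∈ M ∧ ∀ (γ : ℝ → Fin n → ℝ) (v : Fin n → ℝ), γ 0 = x → (∀ᶠ t in 𝓝 (0 : ℝ), γ t ∈ M) →
    HasDerivAt γ v 0 → HasDerivAt (f ∘ γ) 0 0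

/-- The `(i,j)` entry of the Hessian matrix of `g : ℝ^d → ℝ` at `t0`. -/
noncomputable def hessianEntry {d : ℕ} (g : (Fin d → ℝ) → ℝ) (t0 : Fin d → ℝ)
    (i j : Fin d) : ℝ :=
  iteratedFDeriv ℝ 2 g t0 ![Pi.single i 1, Pi.single j 1]

/-- `τ : W → ℝ^n` is a local `C^2` parametrization of `M` around `x`, with `τ t0 = x`. -/
def IsLocalParamAt (n d : ℕ) (M : Set (Fin n → ℝ)) (τ : (Fin d → ℝ) → Fin n → ℝ)
    (W : Set (Fin d → ℝ)) (t0 : Fin d → ℝ) (x : Fin n → ℝ) : Prop :=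
  IsOpen W ∧ t0 ∈ W ∧ τ t0 = x ∧ ContDiffOn ℝ 2 τ W ∧ Set.InjOn τ W ∧
    ∃ U : Set (Fin n → ℝ), IsOpen U ∧ x ∈ U ∧ τ '' W = M ∩ U

/-- `x` is a nondegenerate critical point of `f : M → ℝ` (`M` of dimension `d`): in some local
`C^2` parametrization `τ` around `x`, the Hessian of `f ∘ τ` is invertible. -/
def IsNondegCritPt (n d : ℕ) (M : Set (Fin n → ℝ)) (f : (Fin n → ℝ) → ℝ)
    (x : Fin n → ℝ) : Prop :=
  IsCriticalPt n M f x ∧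
    ∃ (τ : (Fin d → ℝ) → Fin n → ℝ) (W : Set (Fin d → ℝ)) (t0 : Fin d → ℝ),
      IsLocalParamAt n d M τ W t0 x ∧
      (Matrix.of fun i j : Fin d => hessianEntry (f ∘ τ) t0 i j).det ≠ 0

/-- `f` is a Morse function on the `d`-dimensional submanifold `M`. -/
def IsMorseOn (n d : ℕ) (M : Set (Fin n → ℝ)) (f : (Fin n → ℝ) → ℝ) : Prop :=
  ∀ x, IsCriticalPt n M f x → IsNondegCritPt n d M f x

/-- `g` lies in the basic `C^2` neighborhood `V_{h,ε}`: `|g-h| < ε`, `|D_j(g-h)| < ε` and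
`|D_{j1}D_{j2}(g-h)| < ε` on `M` for all `j, j1, j2`. -/
def InC2Ball (n : ℕ) (M : Set (Fin n → ℝ)) (h g : (Fin n → ℝ) → ℝ) (ε : ℝ) : Prop :=
  (∀ x ∈ M, |g x - h x| < ε) ∧
  ∃ (D1 : Fin n → (Fin n → ℝ) → ℝ) (D2 : Fin n → Fin n → (Fin n → ℝ) → ℝ),
    (∀ j, IsDerivField n M (fun x => g x - h x) j (D1 j)) ∧
    (∀ j1 j2, IsDerivField n M (D1 j2) j1 (D2 j1 j2)) ∧
    (∀ j, ∀ x ∈ M, |D1 j x| < ε) ∧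
    (∀ j1 j2, ∀ x ∈ M, |D2 j1 j2 x| < ε)

/-- A definable `C^2` function on `M`. -/
def DefC2Fun (L : FirstOrder.Language) [L.Structure ℝ] (n : ℕ) (M : Set (Fin n → ℝ))
    (f : (Fin n → ℝ) → ℝ) : Prop :=
  DefFun L n M f ∧ CrOn 2 M f

/-- The definable `C^2` topology on `D^2(M)`, generated by the basic neighborhoods `V_{h,ε}`. -/
def C2Topology (L : FirstOrder.Language) [L.Structure ℝ] (n : ℕ) (M : Set (Fin n → ℝ)) :
    TopologicalSpace {f : (Fin n → ℝ) → ℝ // DefC2Fun L n M f} :=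
  TopologicalSpace.generateFrom
    {S | ∃ (h : {f : (Fin n → ℝ) → ℝ // DefC2Fun L n M f}) (ε : ℝ), 0 < ε ∧
      S = {g | InC2Ball n M h.1 g.1 ε}}

/-- The coordinate projection `ℝ^n → ℝ^d` selecting the coordinates `σ 0, …, σ (d-1)`. -/
def coordProj {n d : ℕ} (σ : Fin d → Fin n) (x : Fin n → ℝ) : Fin d → ℝ := fun i => x (σ i)

/-- The open box with corners `a`, `b`. -/
def openBox {n : ℕ} (a b : Fin n → ℝ) : Set (Fin n → ℝ) := {y | ∀ i, a i < y i ∧ y i < b i}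

/-- The multi-valued graph condition at `x`: there is an open box `U ∋ x` and a definable `C^r`
section `τ : π(U) → ℝ^n` of the coordinate projection `π = coordProj σ` with
`M' ∩ U = τ(π(U))`. -/
def MVGraphPointAt (L : FirstOrder.Language) [L.Structure ℝ] (r n d : ℕ) (σ : Fin d → Fin n)
    (M' : Set (Fin n → ℝ)) (x : Fin n → ℝ) : Prop :=
  ∃ a b : Fin n → ℝ, x ∈ openBox a b ∧
    ∃ τ : (Fin d → ℝ) → Fin n → ℝ,
      CrOn r (coordProj σ '' openBox a b) τ ∧
      DefMap L d n (coordProj σ '' openBox a b) τ ∧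
      M' ∩ openBox a b = τ '' (coordProj σ '' openBox a b) ∧
      ∀ y ∈ coordProj σ '' openBox a b, coordProj σ (τ y) = y

/-- A definable `C^r` multi-valued graph with respect to the coordinate projection `coordProj σ`. -/
def IsMVGraph (L : FirstOrder.Language) [L.Structure ℝ] (r n d : ℕ) (σ : Fin d → Fin n)
    (M' : Set (Fin n → ℝ)) : Prop :=
  IsDefCrSubmanifold L r n d M' ∧ ∀ x ∈ M', MVGraphPointAt L r n d σ M' x

/-- The image of the differential `df_x : T_x M → ℝ^k` of `f : M → ℝ^k` at `x`. -/
def diffImage (m k : ℕ) (M : Set (Fin m → ℝ)) (f : (Fin m → ℝ) → Fin k → ℝ)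
    (x : Fin m → ℝ) : Submodule ℝ (Fin k → ℝ) :=
  Submodule.span ℝ
    {w | ∃ (γ : ℝ → Fin m → ℝ) (v : Fin m → ℝ), γ 0 = x ∧ (∀ᶠ t in 𝓝 (0 : ℝ), γ t ∈ M) ∧
      HasDerivAt γ v 0 ∧ HasDerivAt (f ∘ γ) w 0}

/-- The set of critical values of `f : M → ℝ^k`: images of points where `df_x` is not
surjective. -/
def criticalValues (m k : ℕ) (M : Set (Fin m → ℝ)) (f : (Fin m → ℝ) → Fin k → ℝ) :
    Set (Fin k → ℝ) :=
  f '' {x ∈ M | diffImage m k M f x ≠ ⊤}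



/-- Multi-valued graph condition at a point (no definability requirement). -/
def MVGraphPointAtPlain (r n d : ℕ) (σ : Fin d → Fin n) (M' : Set (Fin n → ℝ))
    (x : Fin n → ℝ) : Prop :=
  ∃ a b : Fin n → ℝ, x ∈ openBox a b ∧
    ∃ τ : (Fin d → ℝ) → Fin n → ℝ,
      CrOn r (coordProj σ '' openBox a b) τ ∧
      M' ∩ openBox a b = τ '' (coordProj σ '' openBox a b) ∧
      ∀ y ∈ coordProj σ '' openBox a b, coordProj σ (τ y) = y

/-- A `C^r` multi-valued graph with respect to `coordProj σ` (no definability requirement). -/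
def IsMVGraphPlain (r n d : ℕ) (σ : Fin d → Fin n) (M' : Set (Fin n → ℝ)) : Prop :=
  IsCrSubmanifold r n d M' ∧ ∀ x ∈ M', MVGraphPointAtPlain r n d σ M' x

end DMorse

/-!
In a chart `τ` of `M` the fields `Dⱼ` determine the derivatives of `u ∘ τ`: `dτ w` is tangent,
so `d(u ∘ τ) w = ∑ⱼ (dτ w)ⱼ Dⱼu(τ)`, and differentiating once more expresses `d²(u ∘ τ)` through
`dτ`, `d²τ`, `Dⱼu` and `Dⱼ₁Dⱼ₂u`. Hence, on a compact set of parameters, every `g` in the basic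
neighbourhood `V_{f,ε}` has `g ∘ τ` within `O(ε)` of `f ∘ τ` in `C²`. Since the critical points
of `f` there are nondegenerate (a property independent of the parametrization), compactness gives
`δ > 0` such that every bilinear form `δ`-close to the Hessian of `f ∘ τ` at a parameter where
`‖d(f ∘ τ)‖ < δ` is nondegenerate, and a critical point of `g` is such a parameter. Finally `C` is
covered by finitely many compact pieces, each lying in a chart.
-/

open Matrix

section MatrixCalculus

variable {E : Type*} [NormedAddCommGroup E] [NormedSpace ℝ E] {ι : Type*} [Fintype ι]
  [DecidableEq ι]

theorem DifferentiableAt.matrix_det {N : E → Matrix ι ι ℝ} {x : E}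
    (hN : ∀ i j, DifferentiableAt ℝ (fun y => N y i j) x) :
    DifferentiableAt ℝ (fun y => (N y).det) x := by
  simp only [Matrix.det_apply']
  fun_prop

theorem DifferentiableAt.matrix_inv_apply {N : E → Matrix ι ι ℝ} {x : E}
    (hN : ∀ i j, DifferentiableAt ℝ (fun y => N y i j) x) (hx : (N x).det ≠ 0) (i j : ι) :
    DifferentiableAt ℝ (fun y => (N y)⁻¹ i j) x := by
  simp only [Matrix.inv_def, Ring.inverse_eq_inv', Matrix.smul_apply, Matrix.adjugate_apply,
    smul_eq_mul]
  refine (DifferentiableAt.matrix_det hN).inv hx |>.mul (DifferentiableAt.matrix_det ?_)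
  intro k l
  simp only [Matrix.updateRow_apply]
  split_ifs
  · exact differentiableAt_const _
  · exact hN k l

end MatrixCalculus

namespace Matrix

variable {m k : Type*} [Fintype m] [Fintype k] [DecidableEq k]

noncomputable def pinv (A : Matrix m k ℝ) : Matrix k m ℝ := (Aᵀ * A)⁻¹ * Aᵀ

theorem det_transpose_mul_self_ne_zero {A : Matrix m k ℝ} (hA : Function.Injective A.mulVec) :
    (Aᵀ * A).det ≠ 0 := by
  have := (Matrix.PosDef.conjTranspose_mul_self A hA).det_pos
  rw [conjTranspose_eq_transpose_of_trivial] at this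
  exact this.ne'

theorem pinv_mul {A : Matrix m k ℝ} (hA : Function.Injective A.mulVec) : pinv A * A = 1 := by
  rw [pinv, Matrix.mul_assoc, Matrix.nonsing_inv_mul _
    (isUnit_iff_ne_zero.mpr (det_transpose_mul_self_ne_zero hA))]

theorem transpose_mul_mul_pinv {A : Matrix m k ℝ} (hA : Function.Injective A.mulVec) :
    Aᵀ * A * pinv A = Aᵀ := by
  rw [pinv, ← Matrix.mul_assoc, Matrix.mul_nonsing_inv _
    (isUnit_iff_ne_zero.mpr (det_transpose_mul_self_ne_zero hA)), Matrix.one_mul]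

theorem _root_.DifferentiableAt.matrix_pinv_apply {E : Type*} [NormedAddCommGroup E]
    [NormedSpace ℝ E]
    {A : E → Matrix m k ℝ} {x : E} (hA : ∀ i j, DifferentiableAt ℝ (fun y => A y i j) x)
    (hx : Function.Injective (A x).mulVec) (i : k) (j : m) :
    DifferentiableAt ℝ (fun y => pinv (A y) i j) x := by
  have hG : ∀ a b, DifferentiableAt ℝ (fun y => ((A y)ᵀ * A y) a b) x := by
    intro a b; simp only [Matrix.mul_apply, Matrix.transpose_apply]; fun_prop
  simp only [pinv, Matrix.mul_apply, Matrix.transpose_apply]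
  exact DifferentiableAt.fun_sum fun l _ =>
    (DifferentiableAt.matrix_inv_apply hG (det_transpose_mul_self_ne_zero hx) i l).mul (hA j l)

end Matrix

theorem IsCompact.exists_pos_forall_ne_zero {X V B : Type*} [TopologicalSpace X]
    [NormedAddCommGroup V] [NormedAddCommGroup B] [ProperSpace B] {Q : Set X} (hQ : IsCompact Q)
    {G : X → V} (hG : ContinuousOn G Q) {H : X → B} (hH : ContinuousOn H Q) {Φ : B → ℝ}
    (hΦ : Continuous Φ) (h : ∀ t ∈ Q, G t = 0 → Φ (H t) ≠ 0) :
    ∃ δ > 0, ∀ t ∈ Q, ‖G t‖ < δ → ∀ b, ‖b - H t‖ < δ → Φ b ≠ 0 := by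
  rcases Q.eq_empty_or_nonempty with rfl | ⟨t₀, ht₀⟩
  · exact ⟨1, one_pos, by simp⟩
  set K := Q ×ˢ Metric.closedBall (0 : B) 1
  set Ψ : X × B → ℝ := fun p => ‖G p.1‖ + ‖p.2‖ + |Φ (H p.1 + p.2)|
  have hΨ : ContinuousOn Ψ K := by
    have h1 : ContinuousOn (fun p : X × B => G p.1) K :=
      hG.comp continuous_fst.continuousOn fun p hp => hp.1
    have h2 : ContinuousOn (fun p : X × B => H p.1) K :=
      hH.comp continuous_fst.continuousOn fun p hp => hp.1
    exact (h1.norm.add continuous_snd.continuousOn.norm).add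
      (hΦ.comp_continuousOn (h2.add continuous_snd.continuousOn)).abs
  have hK : IsCompact K := hQ.prod (isCompact_closedBall _ _)
  obtain ⟨p₀, hp₀, hmin⟩ := hK.exists_isMinOn ⟨(t₀, 0), ht₀, by simp⟩ hΨ
  have hpos : 0 < Ψ p₀ := by
    obtain ⟨t, b⟩ := p₀
    refine lt_of_le_of_ne (by positivity) (Ne.symm fun h0 => ?_)
    rw [add_eq_zero_iff_of_nonneg (by positivity) (abs_nonneg _),
      add_eq_zero_iff_of_nonneg (norm_nonneg _) (norm_nonneg _), norm_eq_zero, norm_eq_zero,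
      abs_eq_zero] at h0
    obtain ⟨⟨hG0, rfl⟩, hΦ0⟩ := h0
    exact h t hp₀.1 hG0 (by simpa using hΦ0)
  refine ⟨min (Ψ p₀ / 2) 1, by positivity, fun t ht hGt b hb hΦ0 => ?_⟩
  have hbK : (t, b - H t) ∈ K := ⟨ht, by simpa using hb.le.trans (min_le_right _ _)⟩
  have hle : Ψ p₀ ≤ ‖G t‖ + ‖b - H t‖ :=
    calc Ψ p₀ ≤ Ψ (t, b - H t) := hmin hbK
      _ = ‖G t‖ + ‖b - H t‖ := by simp [Ψ, hΦ0]
  have := min_le_left (Ψ p₀ / 2) 1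
  linarith

theorem abs_sum_mul_le {n : ℕ} (a b : Fin n → ℝ) {ε : ℝ} (hb : ∀ j, |b j| ≤ ε) :
    |∑ j, a j * b j| ≤ n * ‖a‖ * ε := by
  calc |∑ j, a j * b j| ≤ ∑ j, |a j * b j| := Finset.abs_sum_le_sum_abs _ _
    _ ≤ ∑ _j : Fin n, ‖a‖ * ε := Finset.sum_le_sum fun j _ => by
      rw [abs_mul]
      exact mul_le_mul (norm_le_pi_norm a j) (hb j) (abs_nonneg _) (norm_nonneg _)
    _ = n * ‖a‖ * ε := by simp [mul_assoc]

section SecondDerivative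

variable {E E' : Type*} [NormedAddCommGroup E] [NormedSpace ℝ E] [NormedAddCommGroup E']
  [NormedSpace ℝ E'] {G : Type*} [NormedAddCommGroup G] [NormedSpace ℝ G]

theorem ContDiffAt.differentiableAt_fderiv {f : E → G} {x : E} (hf : ContDiffAt ℝ 2 f x) :
    DifferentiableAt ℝ (fderiv ℝ f) x :=
  (hf.fderiv_right (m := 1) le_rfl).differentiableAt one_ne_zero

theorem ContDiffAt.eventually_differentiableAt {f : E → G} {x : E} (hf : ContDiffAt ℝ 2 f x) :
    ∀ᶠ y in 𝓝 x, DifferentiableAt ℝ f y := by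
  filter_upwards [hf.eventually (by simp)] with y hy
  exact hy.differentiableAt two_ne_zero

theorem fderiv_fderiv_apply {f : E → G} {x : E} (hf : DifferentiableAt ℝ (fderiv ℝ f) x)
    (v w : E) : fderiv ℝ (fderiv ℝ f) x v w = fderiv ℝ (fun y => fderiv ℝ f y w) x v := by
  rw [fderiv_clm_apply hf (differentiableAt_const w)]
  simp

theorem fderiv_fderiv_comp_of_fderiv_eq_zero {F : E' → ℝ} {θ : E → E'} {x : E}
    (hF : ContDiffAt ℝ 2 F (θ x)) (hθ : ContDiffAt ℝ 2 θ x) (h0 : fderiv ℝ F (θ x) = 0) :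
    fderiv ℝ (fderiv ℝ (F ∘ θ)) x =
      (fderiv ℝ (fderiv ℝ F) (θ x)).bilinearComp (fderiv ℝ θ x) (fderiv ℝ θ x) := by
  have hev : fderiv ℝ (F ∘ θ) =ᶠ[𝓝 x] fun y => (fderiv ℝ F (θ y)).comp (fderiv ℝ θ y) := by
    filter_upwards [hθ.continuousAt.eventually hF.eventually_differentiableAt,
      hθ.eventually_differentiableAt] with y hFy hθy
    exact fderiv_comp y hFy hθy
  have ha : DifferentiableAt ℝ (fun y => fderiv ℝ F (θ y)) x :=
    hF.differentiableAt_fderiv.comp x (hθ.differentiableAt two_ne_zero)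
  rw [hev.fderiv_eq, fderiv_clm_comp ha hθ.differentiableAt_fderiv, h0,
    fderiv_fun_comp x hF.differentiableAt_fderiv (hθ.differentiableAt two_ne_zero)]
  ext v w
  simp

theorem fderiv_fderiv_sub {f g : E → G} {x : E} (hf : ContDiffAt ℝ 2 f x)
    (hg : ContDiffAt ℝ 2 g x) :
    fderiv ℝ (fderiv ℝ fun y => f y - g y) x =
      fderiv ℝ (fderiv ℝ f) x - fderiv ℝ (fderiv ℝ g) x := by
  have hev : fderiv ℝ (fun y => f y - g y) =ᶠ[𝓝 x] fun y => fderiv ℝ f y - fderiv ℝ g y := by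
    filter_upwards [hf.eventually_differentiableAt, hg.eventually_differentiableAt] with y hfy hgy
    exact fderiv_fun_sub hfy hgy
  rw [hev.fderiv_eq, fderiv_fun_sub hf.differentiableAt_fderiv hg.differentiableAt_fderiv]

end SecondDerivative

namespace DMorse

section BilinDet

variable {ι : Type*} [Fintype ι] [DecidableEq ι]

noncomputable def bilinDet (b : (ι → ℝ) →L[ℝ] (ι → ℝ) →L[ℝ] ℝ) : ℝ :=
  (LinearMap.toMatrix₂' ℝ b.toLinearMap₁₂).det

theorem continuous_bilinDet : Continuous (bilinDet (ι := ι)) := by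
  refine Continuous.matrix_det (continuous_matrix fun i j => ?_)
  simp only [LinearMap.toMatrix₂'_apply, ContinuousLinearMap.toLinearMap₁₂_apply_apply_apply]
  fun_prop

theorem bilinDet_bilinearComp (b : (ι → ℝ) →L[ℝ] (ι → ℝ) →L[ℝ] ℝ)
    (L : (ι → ℝ) →L[ℝ] (ι → ℝ)) :
    bilinDet (b.bilinearComp L L) = LinearMap.det (L : (ι → ℝ) →ₗ[ℝ] ι → ℝ) ^ 2 * bilinDet b := by
  have h : (b.bilinearComp L L).toLinearMap₁₂ = b.toLinearMap₁₂.compl₁₂ L L := rfl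
  rw [bilinDet, bilinDet, h, LinearMap.toMatrix₂'_compl₁₂, det_mul, det_mul, det_transpose,
    LinearMap.det_toMatrix']
  ring

theorem det_hessianEntry {d : ℕ} (F : (Fin d → ℝ) → ℝ) (t : Fin d → ℝ) :
    (Matrix.of fun i j => hessianEntry F t i j).det = bilinDet (fderiv ℝ (fderiv ℝ F) t) := by
  congr 1
  ext i j
  simp [hessianEntry, iteratedFDeriv_two_apply]

end BilinDet


section

variable {n d : ℕ}

noncomputable def zeroPad : (Fin d → ℝ) →L[ℝ] (Fin n → ℝ) :=
  ContinuousLinearMap.pi fun i : Fin n =>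
    if h : (i : ℕ) < d then ContinuousLinearMap.proj ⟨i, h⟩ else 0

noncomputable def truncate (hdn : d ≤ n) : (Fin n → ℝ) →L[ℝ] (Fin d → ℝ) :=
  ContinuousLinearMap.pi fun l : Fin d => ContinuousLinearMap.proj (Fin.castLE hdn l)

theorem zeroPad_apply (t : Fin d → ℝ) (i : Fin n) :
    zeroPad t i = if h : (i : ℕ) < d then t ⟨i, h⟩ else 0 := by
  simp only [zeroPad, ContinuousLinearMap.pi_apply]
  split <;> simp

theorem truncate_zeroPad (hdn : d ≤ n) (t : Fin d → ℝ) : truncate hdn (zeroPad t) = t := by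
  funext l
  simp [truncate, zeroPad_apply]

theorem zeroPad_truncate (hdn : d ≤ n) {y : Fin n → ℝ} (hy : ∀ i : Fin n, d ≤ (i : ℕ) → y i = 0) :
    zeroPad (truncate hdn y) = y := by
  funext i
  rw [zeroPad_apply]
  split
  · rfl
  · exact (hy i (by omega)).symm

theorem zeroPad_apply_of_le (t : Fin d → ℝ) {i : Fin n} (hi : d ≤ (i : ℕ)) :
    zeroPad t i = 0 := by
  rw [zeroPad_apply, dif_neg (by omega)]

structure Chart (n d : ℕ) (M : Set (Fin n → ℝ)) where
  W : Set (Fin d → ℝ)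
  U : Set (Fin n → ℝ)
  τ : (Fin d → ℝ) → Fin n → ℝ
  ρ : (Fin n → ℝ) → Fin d → ℝ
  isOpen_W : IsOpen W
  isOpen_U : IsOpen U
  contDiffAt_τ : ∀ t ∈ W, ContDiffAt ℝ 2 τ t
  contDiffAt_ρ : ∀ x ∈ U, ContDiffAt ℝ 2 ρ x
  mapsTo_τ : Set.MapsTo τ W (M ∩ U)
  mapsTo_ρ : Set.MapsTo ρ (M ∩ U) W
  τ_ρ : ∀ x ∈ M ∩ U, τ (ρ x) = x
  ρ_τ : ∀ t ∈ W, ρ (τ t) = t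

theorem exists_chart {M : Set (Fin n → ℝ)} (hM : IsCrSubmanifold 2 n d M) (hdn : d ≤ n)
    {x : Fin n → ℝ} (hx : x ∈ M) : ∃ c : Chart n d M, x ∈ c.U := by
  obtain ⟨U, V, φ, ψ, hU, hxU, hV, hφ, hψ, hφV, hψU, hψφ, hφψ, -, hflat⟩ := hM x hx
  have hflat' : ∀ y ∈ M ∩ U, ∀ i : Fin n, d ≤ (i : ℕ) → φ y i = 0 := fun y hy => by
    rw [hflat] at hy; exact hy.2
  refine ⟨⟨zeroPad ⁻¹' V, U, fun t => ψ (zeroPad t), fun y => truncate hdn (φ y),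
    hV.preimage zeroPad.continuous, hU, fun t ht => ?_, fun y hy => ?_, fun t ht => ?_,
    fun y hy => ?_, fun y hy => ?_, fun t ht => ?_⟩, hxU⟩
  · exact (hψ.contDiffAt (hV.mem_nhds ht)).comp t zeroPad.contDiff.contDiffAt
  · exact (truncate hdn).contDiff.contDiffAt.comp y (hφ.contDiffAt (hU.mem_nhds hy))
  · refine ⟨?_, hψU ht⟩
    have : ψ (zeroPad t) ∈ U ∩ φ ⁻¹' {y | ∀ i : Fin n, d ≤ (i : ℕ) → y i = 0} :=
      ⟨hψU ht, by simp only [Set.mem_preimage, hφψ _ ht]; exact fun i => zeroPad_apply_of_le t⟩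
    rw [← hflat] at this
    exact this.1
  · simp only [Set.mem_preimage, zeroPad_truncate hdn (hflat' y hy)]
    exact hφV hy.2
  · simp only [zeroPad_truncate hdn (hflat' y hy)]
    exact hψφ y hy.2
  · simp only [hφψ _ ht, truncate_zeroPad]

end

def NondegStableOn (n d : ℕ) (M : Set (Fin n → ℝ)) (f : (Fin n → ℝ) → ℝ)
    (K : Set (Fin n → ℝ)) : Prop :=
  ∃ ε > 0, ∀ g, CrOn 2 M g → InC2Ball n M f g ε →
    ∀ x ∈ K, IsCriticalPt n M g x → IsNondegCritPt n d M g x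

namespace Chart

variable {n d : ℕ} {M : Set (Fin n → ℝ)} (c : Chart n d M) {t : Fin d → ℝ}
  {u f g : (Fin n → ℝ) → ℝ} {ε : ℝ}

theorem differentiableAt_τ (ht : t ∈ c.W) : DifferentiableAt ℝ c.τ t :=
  (c.contDiffAt_τ t ht).differentiableAt two_ne_zero

theorem fderiv_ρ_fderiv_τ (ht : t ∈ c.W) (v : Fin d → ℝ) :
    fderiv ℝ c.ρ (c.τ t) (fderiv ℝ c.τ t v) = v := by
  have hev : c.ρ ∘ c.τ =ᶠ[𝓝 t] id := by
    filter_upwards [c.isOpen_W.mem_nhds ht] with s hs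
    exact c.ρ_τ s hs
  have hρ := (c.contDiffAt_ρ _ (c.mapsTo_τ ht).2).differentiableAt two_ne_zero
  rw [← ContinuousLinearMap.comp_apply, ← fderiv_comp t hρ (c.differentiableAt_τ ht),
    hev.fderiv_eq, fderiv_id, ContinuousLinearMap.id_apply]

/-- Near `0`, `u ∘ γ = (u ∘ τ) ∘ (ρ ∘ γ)`. -/
theorem hasDerivAt_comp_curve {F : Type*} [NormedAddCommGroup F] [NormedSpace ℝ F]
    (ht : t ∈ c.W) {u : (Fin n → ℝ) → F}
    (hu : DifferentiableAt ℝ (u ∘ c.τ) t) {γ : ℝ → Fin n → ℝ} {v : Fin n → ℝ}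
    (hγ0 : γ 0 = c.τ t) (hγM : ∀ᶠ s in 𝓝 0, γ s ∈ M) (hγ : HasDerivAt γ v 0) :
    HasDerivAt (u ∘ γ) (fderiv ℝ (u ∘ c.τ) t (fderiv ℝ c.ρ (c.τ t) v)) 0 := by
  have hU : ∀ᶠ s in 𝓝 0, γ s ∈ M ∩ c.U := hγM.and <| hγ.continuousAt.eventually_mem <| by
    rw [hγ0]; exact c.isOpen_U.mem_nhds (c.mapsTo_τ ht).2
  have hρ : HasDerivAt (c.ρ ∘ γ) (fderiv ℝ c.ρ (c.τ t) v) 0 := by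
    have := ((c.contDiffAt_ρ _ (c.mapsTo_τ ht).2).differentiableAt two_ne_zero).hasFDerivAt
    rw [← hγ0] at this ⊢
    exact this.comp_hasDerivAt 0 hγ
  have hu' : HasFDerivAt (u ∘ c.τ) (fderiv ℝ (u ∘ c.τ) t) ((c.ρ ∘ γ) 0) := by
    rw [Function.comp_apply, hγ0, c.ρ_τ t ht]; exact hu.hasFDerivAt
  refine (hu'.comp_hasDerivAt 0 hρ).congr_of_eventuallyEq ?_
  filter_upwards [hU] with s hs
  simp [c.τ_ρ _ hs]

theorem eventually_τ_line_mem (ht : t ∈ c.W) (v : Fin d → ℝ) :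
    ∀ᶠ s : ℝ in 𝓝 0, c.τ (t + s • v) ∈ M := by
  have hline : Tendsto (fun s : ℝ => t + s • v) (𝓝 0) (𝓝 t) := by
    have : ContinuousAt (fun s : ℝ => t + s • v) 0 := by fun_prop
    simpa using this.tendsto
  filter_upwards [hline.eventually_mem (c.isOpen_W.mem_nhds ht)] with s hs
  exact (c.mapsTo_τ hs).1

theorem mem_curveDerivs (ht : t ∈ c.W) (v : Fin d → ℝ) :
    fderiv ℝ c.τ t v ∈ curveDerivs n M (c.τ t) :=
  ⟨fun s => c.τ (t + s • v), by simp, c.eventually_τ_line_mem ht v,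
    (c.differentiableAt_τ ht).hasFDerivAt.hasLineDerivAt v⟩

theorem tangentAt_eq_range (ht : t ∈ c.W) :
    TangentAt n M (c.τ t) = LinearMap.range (fderiv ℝ c.τ t : (Fin d → ℝ) →ₗ[ℝ] Fin n → ℝ) := by
  refine le_antisymm (Submodule.span_le.mpr ?_) ?_
  · rintro v ⟨γ, hγ0, hγM, hγ⟩
    have := c.hasDerivAt_comp_curve ht (u := id) (c.differentiableAt_τ ht) hγ0 hγM hγ
    exact ⟨_, hγ.unique this |>.symm⟩
  · rintro _ ⟨v, rfl⟩
    exact Submodule.subset_span (c.mem_curveDerivs ht v)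

noncomputable def jac (t : Fin d → ℝ) : Matrix (Fin n) (Fin d) ℝ :=
  LinearMap.toMatrix' (fderiv ℝ c.τ t : (Fin d → ℝ) →ₗ[ℝ] Fin n → ℝ)

theorem jac_mulVec (t v : Fin d → ℝ) : c.jac t *ᵥ v = fderiv ℝ c.τ t v :=
  LinearMap.toMatrix'_mulVec _ v

theorem injective_jac_mulVec (ht : t ∈ c.W) : Function.Injective (c.jac t).mulVec := by
  intro v w h
  simpa [jac_mulVec, c.fderiv_ρ_fderiv_τ ht] using congrArg (fderiv ℝ c.ρ (c.τ t)) h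

/-- The coordinates, in the basis `∂τ/∂tₗ`, of the orthogonal projection of `eⱼ` onto the
tangent space. -/
noncomputable def tangentCoeff (t : Fin d → ℝ) (j : Fin n) : Fin d → ℝ :=
  fun l => (c.jac t).pinv l j

theorem isOrthProjOnto_tangentCoeff (ht : t ∈ c.W) (j : Fin n) :
    IsOrthProjOnto (TangentAt n M (c.τ t)) (Pi.single j 1)
      (fderiv ℝ c.τ t (c.tangentCoeff t j)) := by
  rw [c.tangentAt_eq_range ht]
  refine ⟨⟨_, rfl⟩, ?_⟩
  rintro _ ⟨u, rfl⟩
  have hA := Matrix.transpose_mul_mul_pinv (c.injective_jac_mulVec ht)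
  have hcol : c.tangentCoeff t j = (c.jac t).pinv *ᵥ Pi.single j 1 := by
    ext l; simp [tangentCoeff]
  change dotProduct _ _ = 0
  rw [ContinuousLinearMap.coe_coe, ← jac_mulVec, ← jac_mulVec, hcol, dotProduct_mulVec,
    ← mulVec_transpose, Matrix.mulVec_sub, Matrix.mulVec_mulVec, Matrix.mulVec_mulVec, hA,
    sub_self, zero_dotProduct]

theorem sum_smul_tangentCoeff (ht : t ∈ c.W) (w : Fin d → ℝ) :
    ∑ j, fderiv ℝ c.τ t w j • c.tangentCoeff t j = w := by
  have h : (c.jac t).pinv *ᵥ (c.jac t *ᵥ w) = w := by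
    rw [Matrix.mulVec_mulVec, Matrix.pinv_mul (c.injective_jac_mulVec ht), Matrix.one_mulVec]
  conv_rhs => rw [← h, jac_mulVec]
  ext l
  simp [tangentCoeff, Matrix.mulVec, dotProduct, mul_comm]

theorem derivField_τ_eq (ht : t ∈ c.W) {j : Fin n} {D : (Fin n → ℝ) → ℝ}
    (hD : IsDerivField n M u j D) (hu : DifferentiableAt ℝ (u ∘ c.τ) t) :
    D (c.τ t) = fderiv ℝ (u ∘ c.τ) t (c.tangentCoeff t j) := by
  obtain ⟨γ, hγ0, hγM, hγ, hDγ⟩ :=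
    hD _ (c.mapsTo_τ ht).1 _ (c.isOrthProjOnto_tangentCoeff ht j)
  have := c.hasDerivAt_comp_curve ht hu hγ0 hγM hγ
  rw [c.fderiv_ρ_fderiv_τ ht] at this
  exact hDγ.unique this

/-- `dτ w` is tangent, hence the sum of the projections of the `eⱼ` weighted by its
coordinates. -/
theorem fderiv_comp_τ_eq_sum (ht : t ∈ c.W) {D : Fin n → (Fin n → ℝ) → ℝ}
    (hD : ∀ j, IsDerivField n M u j (D j)) (hu : DifferentiableAt ℝ (u ∘ c.τ) t)
    (w : Fin d → ℝ) :
    fderiv ℝ (u ∘ c.τ) t w = ∑ j, fderiv ℝ c.τ t w j * D j (c.τ t) := by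
  conv_lhs => rw [← c.sum_smul_tangentCoeff ht w]
  simp [map_sum, c.derivField_τ_eq ht (hD _) hu]

theorem differentiableAt_jac_apply (ht : t ∈ c.W) (i : Fin n) (l : Fin d) :
    DifferentiableAt ℝ (fun s => c.jac s i l) t := by
  have := (c.contDiffAt_τ t ht).differentiableAt_fderiv.clm_apply
    (differentiableAt_const (Pi.single l (1 : ℝ)))
  simpa [jac] using (differentiableAt_pi.mp this) i

theorem differentiableAt_tangentCoeff (ht : t ∈ c.W) (j : Fin n) :
    DifferentiableAt ℝ (fun s => c.tangentCoeff s j) t :=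
  differentiableAt_pi.mpr fun l => DifferentiableAt.matrix_pinv_apply
    (c.differentiableAt_jac_apply ht) (c.injective_jac_mulVec ht) l j

theorem differentiableAt_derivField_comp_τ (ht : t ∈ c.W) {D : Fin n → (Fin n → ℝ) → ℝ}
    (hD : ∀ j, IsDerivField n M u j (D j)) (hu : ContDiffAt ℝ 2 (u ∘ c.τ) t) (j : Fin n) :
    DifferentiableAt ℝ (D j ∘ c.τ) t := by
  have hev : D j ∘ c.τ =ᶠ[𝓝 t] fun s => fderiv ℝ (u ∘ c.τ) s (c.tangentCoeff s j) := by
    filter_upwards [c.isOpen_W.mem_nhds ht, hu.eventually_differentiableAt] with s hs hus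
    exact c.derivField_τ_eq hs (hD j) hus
  exact hev.differentiableAt_iff.mpr
    (hu.differentiableAt_fderiv.clm_apply (c.differentiableAt_tangentCoeff ht j))

theorem fderiv_fderiv_comp_τ_eq_sum (ht : t ∈ c.W) {D₁ : Fin n → (Fin n → ℝ) → ℝ}
    {D₂ : Fin n → Fin n → (Fin n → ℝ) → ℝ} (hD₁ : ∀ j, IsDerivField n M u j (D₁ j))
    (hD₂ : ∀ j₁ j₂, IsDerivField n M (D₁ j₂) j₁ (D₂ j₁ j₂)) (hu : ContDiffAt ℝ 2 (u ∘ c.τ) t)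
    (v w : Fin d → ℝ) :
    fderiv ℝ (fderiv ℝ (u ∘ c.τ)) t v w =
      ∑ j, (fderiv ℝ (fderiv ℝ c.τ) t v w j * D₁ j (c.τ t) +
        fderiv ℝ c.τ t w j * ∑ m, fderiv ℝ c.τ t v m * D₂ m j (c.τ t)) := by
  have hev : (fun s => fderiv ℝ (u ∘ c.τ) s w) =ᶠ[𝓝 t]
      fun s => ∑ j, fderiv ℝ c.τ s w j * (D₁ j ∘ c.τ) s := by
    filter_upwards [c.isOpen_W.mem_nhds ht, hu.eventually_differentiableAt] with s hs hus
    exact c.fderiv_comp_τ_eq_sum hs hD₁ hus w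
  have hτw : DifferentiableAt ℝ (fun s => fderiv ℝ c.τ s w) t :=
    (c.contDiffAt_τ t ht).differentiableAt_fderiv.clm_apply (differentiableAt_const w)
  have hτwj : ∀ j, DifferentiableAt ℝ (fun s => fderiv ℝ c.τ s w j) t := fun j =>
    (differentiableAt_pi.mp hτw) j
  have hD : ∀ j, DifferentiableAt ℝ (D₁ j ∘ c.τ) t := fun j =>
    c.differentiableAt_derivField_comp_τ ht hD₁ hu j
  have hτ' : ∀ j, fderiv ℝ (fun s => fderiv ℝ c.τ s w j) t v = fderiv ℝ (fderiv ℝ c.τ) t v w j := by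
    intro j
    have := ((ContinuousLinearMap.proj (R := ℝ) (φ := fun _ : Fin n => ℝ) j).hasFDerivAt.comp t
      hτw.hasFDerivAt).fderiv
    rw [fderiv_fderiv_apply (c.contDiffAt_τ t ht).differentiableAt_fderiv]
    exact congrArg (fun L => L v) this
  have hD' : ∀ j, fderiv ℝ (D₁ j ∘ c.τ) t v = ∑ m, fderiv ℝ c.τ t v m * D₂ m j (c.τ t) :=
    fun j => c.fderiv_comp_τ_eq_sum ht (fun m => hD₂ m j) (hD j) v
  rw [fderiv_fderiv_apply hu.differentiableAt_fderiv, hev.fderiv_eq,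
    fderiv_fun_sum fun j _ => (hτwj j).fun_mul (hD j)]
  simp only [_root_.sum_apply]
  refine Finset.sum_congr rfl fun j _ => ?_
  rw [fderiv_fun_mul (hτwj j) (hD j)]
  simp only [_root_.add_apply, _root_.smul_apply, smul_eq_mul, hτ', hD',
    Function.comp_apply]
  ring

theorem norm_fderiv_comp_τ_le (ht : t ∈ c.W) {D : Fin n → (Fin n → ℝ) → ℝ}
    (hD : ∀ j, IsDerivField n M u j (D j)) (hu : DifferentiableAt ℝ (u ∘ c.τ) t) (hε : 0 ≤ ε)
    (hDε : ∀ j, |D j (c.τ t)| ≤ ε) :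
    ‖fderiv ℝ (u ∘ c.τ) t‖ ≤ n * ‖fderiv ℝ c.τ t‖ * ε := by
  refine ContinuousLinearMap.opNorm_le_bound _ (by positivity) fun w => ?_
  rw [c.fderiv_comp_τ_eq_sum ht hD hu w, Real.norm_eq_abs]
  calc _ ≤ n * ‖fderiv ℝ c.τ t w‖ * ε := abs_sum_mul_le _ _ hDε
    _ ≤ n * (‖fderiv ℝ c.τ t‖ * ‖w‖) * ε := by gcongr; exact (fderiv ℝ c.τ t).le_opNorm w
    _ = _ := by ring

theorem norm_fderiv_fderiv_comp_τ_le (ht : t ∈ c.W) {D₁ : Fin n → (Fin n → ℝ) → ℝ}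
    {D₂ : Fin n → Fin n → (Fin n → ℝ) → ℝ} (hD₁ : ∀ j, IsDerivField n M u j (D₁ j))
    (hD₂ : ∀ j₁ j₂, IsDerivField n M (D₁ j₂) j₁ (D₂ j₁ j₂)) (hu : ContDiffAt ℝ 2 (u ∘ c.τ) t)
    (hε : 0 ≤ ε) (hD₁ε : ∀ j, |D₁ j (c.τ t)| ≤ ε) (hD₂ε : ∀ j₁ j₂, |D₂ j₁ j₂ (c.τ t)| ≤ ε) :
    ‖fderiv ℝ (fderiv ℝ (u ∘ c.τ)) t‖ ≤
      n * (‖fderiv ℝ (fderiv ℝ c.τ) t‖ + n * ‖fderiv ℝ c.τ t‖ ^ 2) * ε := by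
  refine ContinuousLinearMap.opNorm_le_bound₂ _ (by positivity) fun v w => ?_
  rw [c.fderiv_fderiv_comp_τ_eq_sum ht hD₁ hD₂ hu, Finset.sum_add_distrib, Real.norm_eq_abs]
  have h₁ := abs_sum_mul_le (fun j => fderiv ℝ (fderiv ℝ c.τ) t v w j) _ hD₁ε
  have h₂ := abs_sum_mul_le (fun j => fderiv ℝ c.τ t w j) _
    fun j => abs_sum_mul_le (fun m => fderiv ℝ c.τ t v m) _ fun m => hD₂ε m j
  calc _ ≤ _ := abs_add_le _ _
    _ ≤ n * ‖fderiv ℝ (fderiv ℝ c.τ) t v w‖ * ε +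
        n * ‖fderiv ℝ c.τ t w‖ * (n * ‖fderiv ℝ c.τ t v‖ * ε) := add_le_add h₁ h₂
    _ ≤ n * (‖fderiv ℝ (fderiv ℝ c.τ) t‖ * ‖v‖ * ‖w‖) * ε +
        n * (‖fderiv ℝ c.τ t‖ * ‖w‖) * (n * (‖fderiv ℝ c.τ t‖ * ‖v‖) * ε) := by
      gcongr
      · exact (fderiv ℝ (fderiv ℝ c.τ) t).le_opNorm₂ v w
      · exact (fderiv ℝ c.τ t).le_opNorm w
      · exact (fderiv ℝ c.τ t).le_opNorm v
    _ = _ := by ring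

theorem contDiffAt_comp_τ (hf : CrOn 2 M f) (ht : t ∈ c.W) : ContDiffAt ℝ 2 (f ∘ c.τ) t := by
  obtain ⟨U', hU', hτU', g, hg, hgf⟩ := hf.2 one_le_two (c.τ t) (c.mapsTo_τ ht).1
  refine ((hg.contDiffAt (hU'.mem_nhds hτU')).comp t (c.contDiffAt_τ t ht)).congr_of_eventuallyEq ?_
  filter_upwards [c.isOpen_W.mem_nhds ht,
    (c.differentiableAt_τ ht).continuousAt.preimage_mem_nhds (hU'.mem_nhds hτU')] with s hs hsU'
  exact (hgf ⟨(c.mapsTo_τ hs).1, hsU'⟩).symm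

theorem isCriticalPt_τ_iff (ht : t ∈ c.W) (hf : DifferentiableAt ℝ (f ∘ c.τ) t) :
    IsCriticalPt n M f (c.τ t) ↔ fderiv ℝ (f ∘ c.τ) t = 0 := by
  refine ⟨fun hcrit => ContinuousLinearMap.ext fun v => ?_, fun h0 => ⟨(c.mapsTo_τ ht).1,
    fun γ v hγ0 hγM hγ => by simpa [h0] using c.hasDerivAt_comp_curve ht hf hγ0 hγM hγ⟩⟩
  have h0 := hcrit.2 (fun s => c.τ (t + s • v)) _ (by simp) (c.eventually_τ_line_mem ht v)
    ((c.differentiableAt_τ ht).hasFDerivAt.hasLineDerivAt v)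
  exact (hf.hasFDerivAt.hasLineDerivAt v).unique h0

theorem isLocalParamAt (ht : t ∈ c.W) : IsLocalParamAt n d M c.τ c.W t (c.τ t) := by
  refine ⟨c.isOpen_W, ht, rfl, fun s hs => (c.contDiffAt_τ s hs).contDiffWithinAt,
    fun a ha b hb hab => by rw [← c.ρ_τ a ha, hab, c.ρ_τ b hb], c.U, c.isOpen_U,
    (c.mapsTo_τ ht).2, ?_⟩
  refine Set.Subset.antisymm (Set.mapsTo_iff_image_subset.mp c.mapsTo_τ) fun x hx => ?_
  exact ⟨c.ρ x, c.mapsTo_ρ hx, c.τ_ρ x hx⟩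

theorem isNondegCritPt_τ (ht : t ∈ c.W) (hcrit : IsCriticalPt n M f (c.τ t))
    (hdet : bilinDet (fderiv ℝ (fderiv ℝ (f ∘ c.τ)) t) ≠ 0) :
    IsNondegCritPt n d M f (c.τ t) :=
  ⟨hcrit, c.τ, c.W, t, c.isLocalParamAt ht, by rwa [det_hessianEntry]⟩

/-- Nondegeneracy does not depend on the parametrization: another parametrization `τ'` factors
as `τ ∘ θ` with `θ = ρ ∘ τ'`, and at a critical point the Hessian transforms by `dθ`. -/
theorem bilinDet_ne_zero_of_isNondegCritPt (hf : CrOn 2 M f) (ht : t ∈ c.W)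
    (hcrit : fderiv ℝ (f ∘ c.τ) t = 0) (hnd : IsNondegCritPt n d M f (c.τ t)) :
    bilinDet (fderiv ℝ (fderiv ℝ (f ∘ c.τ)) t) ≠ 0 := by
  obtain ⟨-, τ', W', t', ⟨hW', ht', hτt', hτ', -, U', -, -, himg⟩, hdet⟩ := hnd
  have hθt' : (c.ρ ∘ τ') t' = t := by simp [hτt', c.ρ_τ t ht]
  have hτU : τ' t' ∈ c.U := hτt' ▸ (c.mapsTo_τ ht).2
  have hθ : ContDiffAt ℝ 2 (c.ρ ∘ τ') t' :=
    (c.contDiffAt_ρ _ hτU).comp t' (hτ'.contDiffAt (hW'.mem_nhds ht'))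
  have hF : ContDiffAt ℝ 2 (f ∘ c.τ) ((c.ρ ∘ τ') t') := hθt' ▸ c.contDiffAt_comp_τ hf ht
  have hev : f ∘ τ' =ᶠ[𝓝 t'] (f ∘ c.τ) ∘ (c.ρ ∘ τ') := by
    filter_upwards [hW'.mem_nhds ht', (hτ'.continuousOn.continuousAt (hW'.mem_nhds ht'))
      |>.preimage_mem_nhds (c.isOpen_U.mem_nhds hτU)] with s hs hsU
    have hsM : τ' s ∈ M := ((himg ▸ Set.mem_image_of_mem τ' hs : τ' s ∈ M ∩ U')).1
    simp [c.τ_ρ _ ⟨hsM, hsU⟩]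
  rw [det_hessianEntry, hev.fderiv.fderiv_eq,
    fderiv_fderiv_comp_of_fderiv_eq_zero hF hθ (by rwa [hθt']), bilinDet_bilinearComp,
    hθt'] at hdet
  exact right_ne_zero_of_mul hdet

theorem norm_fderiv_sub_le_of_inC2Ball (hf : CrOn 2 M f) (hg : CrOn 2 M g)
    (hfg : InC2Ball n M f g ε) (ht : t ∈ c.W) :
    ‖fderiv ℝ (g ∘ c.τ) t - fderiv ℝ (f ∘ c.τ) t‖ ≤ n * ‖fderiv ℝ c.τ t‖ * ε ∧
      ‖fderiv ℝ (fderiv ℝ (g ∘ c.τ)) t - fderiv ℝ (fderiv ℝ (f ∘ c.τ)) t‖ ≤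
        n * (‖fderiv ℝ (fderiv ℝ c.τ) t‖ + n * ‖fderiv ℝ c.τ t‖ ^ 2) * ε := by
  obtain ⟨hε, D₁, D₂, hD₁, hD₂, hD₁ε, hD₂ε⟩ := hfg
  have hx := (c.mapsTo_τ ht).1
  have hε0 : 0 ≤ ε := (abs_nonneg _).trans (hε _ hx).le
  have hG := c.contDiffAt_comp_τ hg ht
  have hF := c.contDiffAt_comp_τ hf ht
  have hcomp : (fun y => g y - f y) ∘ c.τ = fun s => (g ∘ c.τ) s - (f ∘ c.τ) s := rfl
  have hu : ContDiffAt ℝ 2 ((fun y => g y - f y) ∘ c.τ) t := hcomp ▸ hG.sub hF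
  have h₁ := c.norm_fderiv_comp_τ_le ht hD₁ (hu.differentiableAt two_ne_zero) hε0
    fun j => (hD₁ε j _ hx).le
  have h₂ := c.norm_fderiv_fderiv_comp_τ_le ht hD₁ hD₂ hu hε0 (fun j => (hD₁ε j _ hx).le)
    fun j₁ j₂ => (hD₂ε j₁ j₂ _ hx).le
  rw [hcomp, fderiv_fun_sub (hG.differentiableAt two_ne_zero) (hF.differentiableAt two_ne_zero)]
    at h₁
  rw [hcomp, fderiv_fderiv_sub hG hF] at h₂
  exact ⟨h₁, h₂⟩

theorem exists_bound_fderiv_τ {Q : Set (Fin d → ℝ)} (hQ : IsCompact Q) (hQW : Q ⊆ c.W) :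
    ∃ B ≥ 0, ∀ s ∈ Q, n * ‖fderiv ℝ c.τ s‖ ≤ B ∧
      n * (‖fderiv ℝ (fderiv ℝ c.τ) s‖ + n * ‖fderiv ℝ c.τ s‖ ^ 2) ≤ B := by
  have hcont : ContinuousOn (fun s => n * ‖fderiv ℝ c.τ s‖ +
      n * (‖fderiv ℝ (fderiv ℝ c.τ) s‖ + n * ‖fderiv ℝ c.τ s‖ ^ 2)) Q :=
    continuousOn_of_forall_continuousAt fun s hs => by
      have h₁ := (c.contDiffAt_τ s (hQW hs)).fderiv_right (m := 1) le_rfl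
      have h₂ := (h₁.fderiv_right (m := 0) le_rfl).continuousAt
      exact (continuousAt_const.mul h₁.continuousAt.norm).add (continuousAt_const.mul
        (h₂.norm.add (continuousAt_const.mul (h₁.continuousAt.norm.pow 2))))
  obtain ⟨C, hC⟩ := hQ.exists_bound_of_continuousOn hcont
  refine ⟨max C 0, le_max_right _ _, fun s hs => ?_⟩
  have hs := (le_abs_self _).trans ((hC s hs).trans (le_max_left C 0))
  have h₁ : 0 ≤ n * ‖fderiv ℝ c.τ s‖ := by positivity
  have h₂ : 0 ≤ n * (‖fderiv ℝ (fderiv ℝ c.τ) s‖ + n * ‖fderiv ℝ c.τ s‖ ^ 2) := by positivity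
  constructor <;> linarith

theorem exists_pos_bilinDet_ne_zero (hf : CrOn 2 M f) {Q : Set (Fin d → ℝ)}
    (hQ : IsCompact Q) (hQW : Q ⊆ c.W)
    (hmorse : ∀ s ∈ Q, IsCriticalPt n M f (c.τ s) → IsNondegCritPt n d M f (c.τ s)) :
    ∃ δ > 0, ∀ s ∈ Q, ‖fderiv ℝ (f ∘ c.τ) s‖ < δ →
      ∀ b, ‖b - fderiv ℝ (fderiv ℝ (f ∘ c.τ)) s‖ < δ → bilinDet b ≠ 0 := by
  have hF : ∀ s ∈ Q, ContDiffAt ℝ 2 (f ∘ c.τ) s := fun s hs => c.contDiffAt_comp_τ hf (hQW hs)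
  refine hQ.exists_pos_forall_ne_zero
    (continuousOn_of_forall_continuousAt fun s hs =>
      ((hF s hs).fderiv_right (m := 1) le_rfl).continuousAt)
    (continuousOn_of_forall_continuousAt fun s hs =>
      (((hF s hs).fderiv_right (m := 1) le_rfl).fderiv_right (m := 0) le_rfl).continuousAt)
    continuous_bilinDet fun s hs h0 => ?_
  refine c.bilinDet_ne_zero_of_isNondegCritPt hf (hQW hs) h0 (hmorse s hs ?_)
  exact (c.isCriticalPt_τ_iff (hQW hs) ((hF s hs).differentiableAt two_ne_zero)).mpr h0

theorem nondegStableOn (hf : CrOn 2 M f) {K : Set (Fin n → ℝ)} (hK : IsCompact K)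
    (hKU : K ⊆ M ∩ c.U) (hmorse : ∀ x ∈ K, IsCriticalPt n M f x → IsNondegCritPt n d M f x) :
    NondegStableOn n d M f K := by
  set Q := c.ρ '' K
  have hQW : Q ⊆ c.W := Set.image_subset_iff.mpr fun x hx => c.mapsTo_ρ (hKU hx)
  have hτQ : ∀ s ∈ Q, c.τ s ∈ K := by
    rintro _ ⟨x, hx, rfl⟩
    rwa [c.τ_ρ x (hKU hx)]
  have hQ : IsCompact Q := hK.image_of_continuousOn <| continuousOn_of_forall_continuousAt
    fun x hx => (c.contDiffAt_ρ x (hKU hx).2).continuousAt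
  obtain ⟨δ, hδ, hδstab⟩ :=
    c.exists_pos_bilinDet_ne_zero hf hQ hQW fun s hs => hmorse _ (hτQ s hs)
  obtain ⟨B, hB, hBτ⟩ := c.exists_bound_fderiv_τ hQ hQW
  have hBδ : B * (δ / (B + 1)) < δ := by
    rw [mul_div_assoc', div_lt_iff₀ (by positivity)]
    nlinarith
  refine ⟨δ / (B + 1), by positivity, fun g hg hfg x hx hcrit => ?_⟩
  obtain ⟨t₀, ht₀, rfl⟩ : ∃ t₀ ∈ Q, c.τ t₀ = x := ⟨c.ρ x, ⟨x, hx, rfl⟩, c.τ_ρ x (hKU hx)⟩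
  have ht₀W := hQW ht₀
  have hG0 : fderiv ℝ (g ∘ c.τ) t₀ = 0 := (c.isCriticalPt_τ_iff ht₀W
    ((c.contDiffAt_comp_τ hg ht₀W).differentiableAt two_ne_zero)).mp hcrit
  obtain ⟨h₁, h₂⟩ := c.norm_fderiv_sub_le_of_inC2Ball hf hg hfg ht₀W
  have hsmall₁ : ‖fderiv ℝ (f ∘ c.τ) t₀‖ < δ :=
    calc ‖fderiv ℝ (f ∘ c.τ) t₀‖ = ‖fderiv ℝ (g ∘ c.τ) t₀ - fderiv ℝ (f ∘ c.τ) t₀‖ := by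
          rw [hG0, zero_sub, norm_neg]
      _ ≤ B * (δ / (B + 1)) := h₁.trans (by gcongr; exact (hBτ t₀ ht₀).1)
      _ < δ := hBδ
  have hsmall₂ : ‖fderiv ℝ (fderiv ℝ (g ∘ c.τ)) t₀ - fderiv ℝ (fderiv ℝ (f ∘ c.τ)) t₀‖ < δ :=
    (h₂.trans (by gcongr; exact (hBτ t₀ ht₀).2)).trans_lt hBδ
  exact c.isNondegCritPt_τ ht₀W hcrit (hδstab t₀ ht₀ hsmall₁ _ hsmall₂)

end Chart

section

variable {n d : ℕ} {M : Set (Fin n → ℝ)} {f g : (Fin n → ℝ) → ℝ}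

theorem mem_curveDerivs_of_mem_tangentAt (hM : IsCrSubmanifold 2 n d M) (hdn : d ≤ n)
    {x v : Fin n → ℝ} (hx : x ∈ M) (hv : v ∈ TangentAt n M x) : v ∈ curveDerivs n M x := by
  obtain ⟨c, hxU⟩ := exists_chart hM hdn hx
  have ht := c.mapsTo_ρ ⟨hx, hxU⟩
  have hτ : c.τ (c.ρ x) = x := c.τ_ρ x ⟨hx, hxU⟩
  rw [← hτ, c.tangentAt_eq_range ht] at hv
  obtain ⟨w, rfl⟩ := hv
  have h := c.mem_curveDerivs ht w
  rw [hτ] at h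
  exact h

theorem isDerivField_zero (hM : IsCrSubmanifold 2 n d M) (hdn : d ≤ n)
    {u : (Fin n → ℝ) → ℝ} (hu : ∀ x, u x = 0) (j : Fin n) : IsDerivField n M u j 0 := by
  intro x hx p hp
  obtain ⟨γ, hγ0, hγM, hγ⟩ := mem_curveDerivs_of_mem_tangentAt hM hdn hx hp.1
  refine ⟨γ, hγ0, hγM, hγ, ?_⟩
  simpa [Function.comp_def, hu] using hasDerivAt_const (0 : ℝ) (0 : ℝ)

theorem inC2Ball_self (hM : IsCrSubmanifold 2 n d M) (hdn : d ≤ n) (f : (Fin n → ℝ) → ℝ)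
    {ε : ℝ} (hε : 0 < ε) : InC2Ball n M f f ε :=
  ⟨fun _ _ => by simpa using hε, fun _ => 0, fun _ _ => 0,
    fun j => isDerivField_zero hM hdn (fun x => sub_self (f x)) j,
    fun _ _ => isDerivField_zero hM hdn (fun _ => rfl) _, fun _ _ _ => by simpa using hε,
    fun _ _ _ _ => by simpa using hε⟩

theorem InC2Ball.mono {ε ε' : ℝ} (h : InC2Ball n M f g ε) (hε : ε ≤ ε') :
    InC2Ball n M f g ε' := by
  obtain ⟨h₀, D₁, D₂, hD₁, hD₂, h₁, h₂⟩ := h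
  exact ⟨fun x hx => (h₀ x hx).trans_le hε, D₁, D₂, hD₁, hD₂,
    fun j x hx => (h₁ j x hx).trans_le hε, fun j₁ j₂ x hx => (h₂ j₁ j₂ x hx).trans_le hε⟩

theorem nondegStableOn_empty : NondegStableOn n d M f ∅ :=
  ⟨1, one_pos, by simp⟩

theorem NondegStableOn.mono {K K' : Set (Fin n → ℝ)} (h : NondegStableOn n d M f K)
    (hK : K' ⊆ K) : NondegStableOn n d M f K' := by
  obtain ⟨ε, hε, h⟩ := h
  exact ⟨ε, hε, fun g hg hfg x hx => h g hg hfg x (hK hx)⟩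

theorem NondegStableOn.union {K₁ K₂ : Set (Fin n → ℝ)} (h₁ : NondegStableOn n d M f K₁)
    (h₂ : NondegStableOn n d M f K₂) : NondegStableOn n d M f (K₁ ∪ K₂) := by
  obtain ⟨ε₁, hε₁, h₁⟩ := h₁
  obtain ⟨ε₂, hε₂, h₂⟩ := h₂
  refine ⟨min ε₁ ε₂, lt_min hε₁ hε₂, fun g hg hfg x hx => ?_⟩
  rcases hx with hx | hx
  · exact h₁ g hg (hfg.mono (min_le_left _ _)) x hx
  · exact h₂ g hg (hfg.mono (min_le_right _ _)) x hx

theorem nondegStableOn_of_isCompact (hM : IsCrSubmanifold 2 n d M) (hdn : d ≤ n)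
    (hf : CrOn 2 M f) {K : Set (Fin n → ℝ)} (hK : IsCompact K) (hKM : K ⊆ M)
    (hmorse : ∀ x ∈ K, IsCriticalPt n M f x → IsNondegCritPt n d M f x) :
    NondegStableOn n d M f K := by
  refine hK.induction_on nondegStableOn_empty (fun _ _ hst h => h.mono hst)
    (fun _ _ h₁ h₂ => h₁.union h₂) fun x hx => ?_
  obtain ⟨c, hxU⟩ := exists_chart hM hdn (hKM hx)
  obtain ⟨N, hN, hxN, hNU⟩ := exists_compact_subset c.isOpen_U hxU
  exact ⟨K ∩ N, inter_mem_nhdsWithin K (mem_interior_iff_mem_nhds.mp hxN),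
    c.nondegStableOn hf (hK.inter_right hN.isClosed) (fun y hy => ⟨hKM hy.1, hNU hy.2⟩)
      fun y hy => hmorse y hy.1⟩

end

theorem statement1_general (L : FirstOrder.Language) [L.Structure ℝ]
    (n d : ℕ) (M C : Set (Fin n → ℝ)) (σ : Fin d → Fin n) (hσ : StrictMono σ)
    (hM : IsDefCrSubmanifold L 2 n d M)
    (hCM : C ⊆ M) (hCcpt : IsCompact C) :
    @IsOpen _ (C2Topology L n M)
      {f : {f : (Fin n → ℝ) → ℝ // DefC2Fun L n M f} |
        ∀ x ∈ C, IsCriticalPt n M f.1 x → IsNondegCritPt n d M f.1 x} := by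
  have hdn : d ≤ n := by simpa using Fintype.card_le_of_injective σ hσ.injective
  let := C2Topology L n M
  refine isOpen_iff_forall_mem_open.mpr fun f hf => ?_
  obtain ⟨ε, hε, hstab⟩ := nondegStableOn_of_isCompact hM.2 hdn f.2.2 hCcpt hCM hf
  exact ⟨{g | InC2Ball n M f.1 g.1 ε}, fun g hg x hx => hstab g.1 g.2.2 hg x hx,
    TopologicalSpace.isOpen_generateFrom_of_mem ⟨f, ε, hε, rfl⟩, inC2Ball_self hM.2 hdn f.1 hε⟩

theorem statement1 (L : FirstOrder.Language) [L.Structure ℝ]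
    (hfield : ExpandsRealOrderedField L) (hdmin : DMinimal L)
    (n d : ℕ) (M C U : Set (Fin n → ℝ)) (σ : Fin d → Fin n) (hσ : StrictMono σ)
    (hM : IsDefCrSubmanifold L 2 n d M) (hMcpt : IsCompact M)
    (hCM : C ⊆ M) (hCcpt : IsCompact C) (hCdef : Def L n C)
    (hCU : C ⊆ U) (hUM : U ⊆ M) (hU : IsMVGraph L 2 n d σ U) :
    @IsOpen _ (C2Topology L n M)
      {f : {f : (Fin n → ℝ) → ℝ // DefC2Fun L n M f} |
        ∀ x ∈ C, IsCriticalPt n M f.1 x → IsNondegCritPt n d M f.1 x} :=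
  statement1_general L n d M C σ hσ hM hCM hCcpt

end DMorse
end

section
/- Let π : ℝ^n → ℝ^d be the projection onto the first d coordinates, let U be a definable C^2 multi-valued graph with respect to π (definable in a d-minimal expansion of the real ordered field), and let f : U → ℝ be a definable C^2 function. Consider the definable C^1 map H : U → ℝ^d given by H(x) = (∂f/∂x_1(x),…,∂f/∂x_d(x)), the partial derivatives being taken with respect to the local coordinates x_1,…,x_d on U. Then for every (a_1,…,a_d) ∈ ℝ^d that is not a critical value of H, the function Φ : U → ℝ, Φ(x_1,…,x_n) = f(x_1,…,x_n) − Σ_{i=1}^d a_i x_i, is a Morse function on U; since the set of critical values of H has empty interior in ℝ^d, for every ε > 0 one can choose such (a_1,…,a_d) with |a_i| < ε for all i. -/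
open FirstOrder Filter Topology

namespace DMorse

/-!
In a section `τ` of the multi-valued graph over an open set of coordinates, `H` is the gradient of
`g = f ∘ τ`, and `Φ ∘ τ = g - ⟪a, ·⟫`. So a critical point `x` of `Φ` is a point with `H x = a`,
and the image of the differential of `H` at `x` is the range of the Hessian of `g`. If `a` is not a
critical value, that Hessian, which is also the Hessian of `Φ ∘ τ`, is therefore invertible.
Locally the critical values of `H` are the image under `∇g` of the set where `det ∇²g = 0`, a null
set by the equidimensional Sard lemma; countably many sections cover `U`, so the critical values
form a null set, which cannot contain the box `(-ε, ε)^d`.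
-/

open MeasureTheory

section CrOn

variable {E F G : Type*} [NormedAddCommGroup E] [NormedSpace ℝ E] [NormedAddCommGroup F]
  [NormedSpace ℝ F] [NormedAddCommGroup G] [NormedSpace ℝ G] {r : ℕ}

lemma CrOn.contDiffAt_comp {S : Set E} {f : E → F} (hf : CrOn r S f) (hr : 1 ≤ r)
    {O : Set G} {τ : G → E} (hO : IsOpen O) (hτ : ContinuousOn τ O) (hmaps : Set.MapsTo τ O S)
    {y : G} (hy : y ∈ O) (hτy : ContDiffAt ℝ r τ y) : ContDiffAt ℝ r (f ∘ τ) y := by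
  obtain ⟨V, hV, hτyV, g, hg, hfg⟩ := hf.2 hr (τ y) (hmaps hy)
  have hgτ : ContDiffAt ℝ r (g ∘ τ) y := (hg.contDiffAt (hV.mem_nhds hτyV)).comp y hτy
  refine hgτ.congr_of_eventuallyEq (Filter.eventuallyEq_of_mem
    ((hτ.isOpen_inter_preimage hO hV).mem_nhds ⟨hy, hτyV⟩) fun z hz => ?_)
  exact (hfg ⟨hmaps hz.1, hz.2⟩).symm

lemma CrOn.contDiffAt {S : Set E} {f : E → F} (hf : CrOn r S f) (hr : 1 ≤ r) (hS : IsOpen S)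
    {x : E} (hx : x ∈ S) : ContDiffAt ℝ r f x :=
  hf.contDiffAt_comp hr hS continuousOn_id (Set.mapsTo_id S) hx contDiffAt_id

end CrOn

lemma openBox_eq_pi {n : ℕ} (a b : Fin n → ℝ) :
    openBox a b = Set.univ.pi fun i => Set.Ioo (a i) (b i) := by
  ext y
  simp [openBox]

lemma isOpen_openBox {n : ℕ} (a b : Fin n → ℝ) : IsOpen (openBox a b) := by
  rw [openBox_eq_pi]
  exact isOpen_set_pi Set.finite_univ fun i _ => isOpen_Ioo

section CoordProj

variable {n d : ℕ} (σ : Fin d → Fin n)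

noncomputable def coordProjCLM : (Fin n → ℝ) →L[ℝ] (Fin d → ℝ) :=
  ContinuousLinearMap.pi fun i => ContinuousLinearMap.proj (σ i)

@[simp]
lemma coe_coordProjCLM : ⇑(coordProjCLM σ) = coordProj σ := rfl

variable {σ}

lemma isOpenMap_coordProj (hσ : Function.Injective σ) : IsOpenMap (coordProj σ) :=
  (coordProjCLM σ).isOpenMap fun y => ⟨Function.extend σ y 0, funext (hσ.extend_apply y 0)⟩

end CoordProj

lemma hasDerivAt_line {E : Type*} [NormedAddCommGroup E] [NormedSpace ℝ E] (y u : E) :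
    HasDerivAt (fun t : ℝ => y + t • u) u 0 := by
  simpa using ((hasDerivAt_id (0 : ℝ)).smul_const u).const_add y

lemma eventually_line_mem {E : Type*} [NormedAddCommGroup E] [NormedSpace ℝ E] {O : Set E}
    (hO : IsOpen O) {y : E} (hy : y ∈ O) (u : E) : ∀ᶠ t in 𝓝 (0 : ℝ), y + t • u ∈ O :=
  (hasDerivAt_line y u).continuousAt.eventually_mem (by simpa using hO.mem_nhds hy)

lemma LinearMap.range_eq_top_iff_det_ne_zero {K V : Type*} [Field K] [AddCommGroup V]
    [Module K V] [FiniteDimensional K V] (A : V →ₗ[K] V) :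
    LinearMap.range A = ⊤ ↔ LinearMap.det A ≠ 0 := by
  rw [← LinearMap.isUnit_iff_range_eq_top, LinearMap.isUnit_iff_isUnit_det, isUnit_iff_ne_zero]

lemma fderiv_eventuallyEq_sub_of_eventuallyEq {E F : Type*} [NormedAddCommGroup E]
    [NormedSpace ℝ E] [NormedAddCommGroup F] [NormedSpace ℝ F] {g g₁ : E → F} {ℓ : E →L[ℝ] F}
    {y : E} (hg : ∀ᶠ w in 𝓝 y, DifferentiableAt ℝ g w) (h : g₁ =ᶠ[𝓝 y] fun w => g w - ℓ w) :
    fderiv ℝ g₁ =ᶠ[𝓝 y] fun w => fderiv ℝ g w - ℓ := by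
  filter_upwards [h.eventuallyEq_nhds, hg] with w hw hgw
  rw [hw.fderiv_eq]
  exact (hgw.hasFDerivAt.sub ℓ.hasFDerivAt).fderiv

lemma measure_image_eq_zero_of_forall_nhds {X Y : Type*} [TopologicalSpace X]
    [SecondCountableTopology X] [MeasurableSpace Y] {μ : Measure Y} {F : X → Y}
    {s : Set X} (h : ∀ x ∈ s, ∃ V ∈ 𝓝 x, μ (F '' (s ∩ V)) = 0) : μ (F '' s) = 0 := by
  choose! V hV hnull using h
  obtain ⟨t, hts, htc, hcover⟩ :=
    TopologicalSpace.countable_cover_nhdsWithin fun x hx => mem_nhdsWithin_of_mem_nhds (hV x hx)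
  have hsub : F '' s ⊆ ⋃ x ∈ t, F '' (s ∩ V x) := by
    rintro _ ⟨x, hx, rfl⟩
    obtain ⟨z, hz, hxz⟩ := Set.mem_iUnion₂.1 (hcover hx)
    exact Set.mem_biUnion hz ⟨x, ⟨hx, hxz⟩, rfl⟩
  exact measure_mono_null hsub
    ((measure_biUnion_null_iff htc).2 fun x hx => hnull x (hts hx))

lemma exists_forall_abs_lt_notMem_of_measure_eq_zero {d : ℕ} {s : Set (Fin d → ℝ)}
    (hs : volume s = 0) {ε : ℝ} (hε : 0 < ε) :
    ∃ a : Fin d → ℝ, (∀ i, |a i| < ε) ∧ a ∉ s := by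
  obtain ⟨a, ha, has⟩ := Set.not_subset.1 fun hsub =>
    (Metric.measure_ball_pos volume (0 : Fin d → ℝ) hε).ne'
      (measure_mono_null hsub hs)
  exact ⟨a, fun i => by simpa using (pi_norm_lt_iff hε).1 (mem_ball_zero_iff.1 ha) i, has⟩

section Hessian

variable {d : ℕ}

noncomputable def partialsCLM (d : ℕ) : ((Fin d → ℝ) →L[ℝ] ℝ) →L[ℝ] (Fin d → ℝ) :=
  ContinuousLinearMap.pi fun i => ContinuousLinearMap.apply ℝ ℝ (Pi.single i 1)

noncomputable def grad (g : (Fin d → ℝ) → ℝ) (y : Fin d → ℝ) : Fin d → ℝ :=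
  partialsCLM d (fderiv ℝ g y)

noncomputable def hessCLM (g : (Fin d → ℝ) → ℝ) (y : Fin d → ℝ) :
    (Fin d → ℝ) →L[ℝ] (Fin d → ℝ) :=
  (partialsCLM d).comp (fderiv ℝ (fderiv ℝ g) y)

lemma hasFDerivAt_grad {g : (Fin d → ℝ) → ℝ} {y : Fin d → ℝ} (hg : ContDiffAt ℝ 2 g y) :
    HasFDerivAt (grad g) (hessCLM g y) y :=
  (partialsCLM d).hasFDerivAt.comp y
    ((hg.fderiv_right (m := 1) (by norm_num)).differentiableAt one_ne_zero).hasFDerivAt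

lemma det_hessCLM (g : (Fin d → ℝ) → ℝ) (y : Fin d → ℝ) :
    (hessCLM g y).det = (Matrix.of fun i j => hessianEntry g y i j).det := by
  rw [← Matrix.det_transpose, ContinuousLinearMap.det, ← LinearMap.det_toMatrix']
  congr 1
  ext i j
  simp [LinearMap.toMatrix'_apply, hessCLM, partialsCLM, hessianEntry, iteratedFDeriv_two_apply]

lemma measure_grad_image_degenerate_eq_zero {g : (Fin d → ℝ) → ℝ} {O : Set (Fin d → ℝ)}
    (hg : ∀ y ∈ O, ContDiffAt ℝ 2 g y) :
    volume (grad g '' {y ∈ O | (hessCLM g y).det = 0}) = 0 :=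
  addHaar_image_eq_zero_of_det_fderivWithin_eq_zero _
    (fun y hy => (hasFDerivAt_grad (hg y hy.1)).hasFDerivWithinAt) fun _ hy => hy.2

end Hessian

structure IsGraphChart {n d : ℕ} (σ : Fin d → Fin n) (U B : Set (Fin n → ℝ))
    (τ : (Fin d → ℝ) → Fin n → ℝ) : Prop where
  isOpen : IsOpen B
  isOpen_image : IsOpen (coordProj σ '' B)
  inter_eq_image : U ∩ B = τ '' (coordProj σ '' B)
  coordProj_apply : ∀ y ∈ coordProj σ '' B, coordProj σ (τ y) = y
  contDiffAt : ∀ y ∈ coordProj σ '' B, ContDiffAt ℝ 2 τ y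

namespace IsGraphChart

variable {n d : ℕ} {σ : Fin d → Fin n} {U B : Set (Fin n → ℝ)} {τ : (Fin d → ℝ) → Fin n → ℝ}

lemma mapsTo (hτ : IsGraphChart σ U B τ) : Set.MapsTo τ (coordProj σ '' B) (U ∩ B) := by
  intro y hy
  rw [hτ.inter_eq_image]
  exact Set.mem_image_of_mem τ hy

lemma apply_coordProj (hτ : IsGraphChart σ U B τ) {x : Fin n → ℝ} (hx : x ∈ U ∩ B) :
    τ (coordProj σ x) = x := by
  rw [hτ.inter_eq_image] at hx
  obtain ⟨y, hy, rfl⟩ := hx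
  rw [hτ.coordProj_apply y hy]

lemma continuousOn (hτ : IsGraphChart σ U B τ) : ContinuousOn τ (coordProj σ '' B) :=
  fun y hy => (hτ.contDiffAt y hy).continuousAt.continuousWithinAt

lemma isLocalParamAt (hτ : IsGraphChart σ U B τ) {x : Fin n → ℝ} (hx : x ∈ U ∩ B) :
    IsLocalParamAt n d U τ (coordProj σ '' B) (coordProj σ x) x := by
  refine ⟨hτ.isOpen_image, Set.mem_image_of_mem _ hx.2, hτ.apply_coordProj hx,
    fun y hy => (hτ.contDiffAt y hy).contDiffWithinAt, fun y₁ hy₁ y₂ hy₂ h => ?_,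
    B, hτ.isOpen, hx.2, hτ.inter_eq_image.symm⟩
  rw [← hτ.coordProj_apply y₁ hy₁, h, hτ.coordProj_apply y₂ hy₂]

lemma line_lift (hτ : IsGraphChart σ U B τ) {y : Fin d → ℝ} (hy : y ∈ coordProj σ '' B)
    (u : Fin d → ℝ) :
    (fun t : ℝ => τ (y + t • u)) 0 = τ y ∧ (∀ᶠ t in 𝓝 (0 : ℝ), τ (y + t • u) ∈ U) ∧
      HasDerivAt (fun t : ℝ => τ (y + t • u)) (fderiv ℝ τ y u) 0 :=
  ⟨by simp, (eventually_line_mem hτ.isOpen_image hy u).mono fun _ ht => (hτ.mapsTo ht).1,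
    ((hτ.contDiffAt y hy).differentiableAt (by norm_num)).hasFDerivAt.comp_hasDerivAt_of_eq 0
      (hasDerivAt_line y u) (by simp)⟩

lemma fderiv_comp_eq_zero_of_isCriticalPt (hτ : IsGraphChart σ U B τ)
    {Φ : (Fin n → ℝ) → ℝ} {x : Fin n → ℝ} (hΦ : IsCriticalPt n U Φ x) (hx : x ∈ B)
    (hΦτ : DifferentiableAt ℝ (Φ ∘ τ) (coordProj σ x)) :
    fderiv ℝ (Φ ∘ τ) (coordProj σ x) = 0 := by
  ext1 u
  obtain ⟨h0, hU, hγ⟩ := hτ.line_lift (Set.mem_image_of_mem _ hx) u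
  rw [hτ.apply_coordProj ⟨hΦ.1, hx⟩] at h0
  exact ((hΦτ.hasFDerivAt.comp_hasDerivAt_of_eq 0 (hasDerivAt_line _ u) (by simp)).unique
    (hΦ.2 _ _ h0 hU hγ))

lemma diffImage_eq_range (hτ : IsGraphChart σ U B τ) {k : ℕ} {G : (Fin d → ℝ) → Fin k → ℝ}
    {H : (Fin n → ℝ) → Fin k → ℝ} (hH : Set.EqOn H (G ∘ coordProj σ) (U ∩ B))
    {y : Fin d → ℝ} (hy : y ∈ coordProj σ '' B) (hG : DifferentiableAt ℝ G y) :
    diffImage n k U H (τ y) = LinearMap.range (fderiv ℝ G y : (Fin d → ℝ) →ₗ[ℝ] Fin k → ℝ) := by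
  apply le_antisymm
  · refine Submodule.span_le.2 ?_
    rintro w ⟨γ, v, hγ0, hγU, hγ, hHγ⟩
    have hγB : ∀ᶠ t in 𝓝 (0 : ℝ), γ t ∈ B :=
      hγ.continuousAt.eventually_mem (hτ.isOpen.mem_nhds (hγ0 ▸ (hτ.mapsTo hy).2))
    have hGγ : HasDerivAt (G ∘ coordProj σ ∘ γ) (fderiv ℝ G y (coordProj σ v)) 0 :=
      hG.hasFDerivAt.comp_hasDerivAt_of_eq 0 ((coordProjCLM σ).hasFDerivAt.comp_hasDerivAt 0 hγ)
        (by simp [hγ0, hτ.coordProj_apply y hy])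
    rw [hHγ.unique (hGγ.congr_of_eventuallyEq ((hγU.and hγB).mono fun t ht => hH ht))]
    exact LinearMap.mem_range_self _ _
  · rintro _ ⟨u, rfl⟩
    obtain ⟨h0, hU, hγ⟩ := hτ.line_lift hy u
    refine Submodule.subset_span ⟨_, _, h0, hU, hγ, ?_⟩
    refine (hG.hasFDerivAt.comp_hasDerivAt_of_eq 0 (hasDerivAt_line y u) (by simp))
      |>.congr_of_eventuallyEq ?_
    filter_upwards [eventually_line_mem hτ.isOpen_image hy u] with t ht
    simp [hH (hτ.mapsTo ht), hτ.coordProj_apply _ ht]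

lemma isNondegCritPt {f : (Fin n → ℝ) → ℝ} {H : (Fin n → ℝ) → Fin d → ℝ}
    (hτ : IsGraphChart σ U B τ) (hfτ : ∀ y ∈ coordProj σ '' B, ContDiffAt ℝ 2 (f ∘ τ) y)
    (hH : Set.EqOn H (grad (f ∘ τ) ∘ coordProj σ) (U ∩ B)) {a : Fin d → ℝ}
    (ha : a ∉ criticalValues n d U H) {x : Fin n → ℝ} (hx : x ∈ B)
    (hc : IsCriticalPt n U (fun x => f x - ∑ i, a i * x (σ i)) x) :
    IsNondegCritPt n d U (fun x => f x - ∑ i, a i * x (σ i)) x := by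
  set Φ : (Fin n → ℝ) → ℝ := fun x => f x - ∑ i, a i * x (σ i)
  set y := coordProj σ x
  have hxUB : x ∈ U ∩ B := ⟨hc.1, hx⟩
  have hy : y ∈ coordProj σ '' B := Set.mem_image_of_mem _ hx
  let ℓ : (Fin d → ℝ) →L[ℝ] ℝ := ∑ i, a i • ContinuousLinearMap.proj i
  have hΦτ : Φ ∘ τ =ᶠ[𝓝 y] fun w => (f ∘ τ) w - ℓ w := by
    filter_upwards [hτ.isOpen_image.mem_nhds hy] with w hw
    have hτw := congrFun (hτ.coordProj_apply w hw)
    simp only [coordProj] at hτw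
    simp [Φ, ℓ, hτw]
  have hD : fderiv ℝ (Φ ∘ τ) =ᶠ[𝓝 y] fun w => fderiv ℝ (f ∘ τ) w - ℓ :=
    fderiv_eventuallyEq_sub_of_eventuallyEq (((hfτ y hy).eventually (by simp)).mono
      fun _ hw => hw.differentiableAt (by norm_num)) hΦτ
  have hgrad : grad (f ∘ τ) y = a := by
    have hΦτy : ContDiffAt ℝ 2 (Φ ∘ τ) y :=
      ((hfτ y hy).sub ℓ.contDiff.contDiffAt).congr_of_eventuallyEq hΦτ
    have h0 := hτ.fderiv_comp_eq_zero_of_isCriticalPt hc hx (hΦτy.differentiableAt (by norm_num))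
    rw [hD.eq_of_nhds, sub_eq_zero] at h0
    ext i
    simp [grad, partialsCLM, h0, ℓ, Pi.single_apply]
  have hsurj : LinearMap.range (hessCLM (f ∘ τ) y : (Fin d → ℝ) →ₗ[ℝ] Fin d → ℝ) = ⊤ := by
    have hG := hasFDerivAt_grad (hfτ y hy)
    rw [← hG.fderiv, ← hτ.diffImage_eq_range hH hy hG.differentiableAt, hτ.apply_coordProj hxUB]
    by_contra hne
    exact ha ⟨x, ⟨hc.1, hne⟩, (hH hxUB).trans hgrad⟩
  have hhess : hessCLM (Φ ∘ τ) y = hessCLM (f ∘ τ) y := by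
    simp only [hessCLM, hD.fderiv_eq, fderiv_sub_const]
  refine ⟨hc, τ, _, y, hτ.isLocalParamAt hxUB, ?_⟩
  rw [← det_hessCLM, hhess]
  exact (LinearMap.range_eq_top_iff_det_ne_zero _).1 hsurj

end IsGraphChart

lemma IsMVGraph.isMVGraphPlain {L : FirstOrder.Language} [L.Structure ℝ] {r n d : ℕ}
    {σ : Fin d → Fin n} {M : Set (Fin n → ℝ)} (hM : IsMVGraph L r n d σ M) :
    IsMVGraphPlain r n d σ M :=
  ⟨hM.1.2, fun x hx =>
    let ⟨a, b, hxab, τ, hτ, _, hgraph, hsec⟩ := hM.2 x hx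
    ⟨a, b, hxab, τ, hτ, hgraph, hsec⟩⟩

section MultiValuedGraph

variable {n d : ℕ} {σ : Fin d → Fin n} {U : Set (Fin n → ℝ)} {f : (Fin n → ℝ) → ℝ}
  {H : (Fin n → ℝ) → Fin d → ℝ}

def IsGradInSections (σ : Fin d → Fin n) (U : Set (Fin n → ℝ)) (f : (Fin n → ℝ) → ℝ)
    (H : (Fin n → ℝ) → Fin d → ℝ) : Prop :=
  ∀ x ∈ U, ∀ a b : Fin n → ℝ, x ∈ openBox a b →
    ∀ τ : (Fin d → ℝ) → Fin n → ℝ,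
      CrOn 2 (coordProj σ '' openBox a b) τ →
      U ∩ openBox a b = τ '' (coordProj σ '' openBox a b) →
      (∀ y ∈ coordProj σ '' openBox a b, coordProj σ (τ y) = y) →
      ∀ i : Fin d, H x i = fderiv ℝ (f ∘ τ) (coordProj σ x) (Pi.single i 1)

lemma exists_graphChart (hσ : Function.Injective σ) (hU : IsMVGraphPlain 2 n d σ U)
    (hf : CrOn 2 U f) (hH : IsGradInSections σ U f H) {x : Fin n → ℝ} (hx : x ∈ U) :
    ∃ B τ, x ∈ B ∧ IsGraphChart σ U B τ ∧
      (∀ y ∈ coordProj σ '' B, ContDiffAt ℝ 2 (f ∘ τ) y) ∧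
      Set.EqOn H (grad (f ∘ τ) ∘ coordProj σ) (U ∩ B) := by
  obtain ⟨a, b, hxab, τ, hτ, hgraph, hsec⟩ := hU.2 x hx
  have hO : IsOpen (coordProj σ '' openBox a b) := isOpenMap_coordProj hσ _ (isOpen_openBox a b)
  have hchart : IsGraphChart σ U (openBox a b) τ :=
    ⟨isOpen_openBox a b, hO, hgraph, hsec, fun y hy => hτ.contDiffAt (by norm_num) hO hy⟩
  refine ⟨openBox a b, τ, hxab, hchart, fun y hy => ?_, fun x' hx' => ?_⟩
  · exact hf.contDiffAt_comp (by norm_num) hO hchart.continuousOn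
      (fun z hz => (hchart.mapsTo hz).1) hy (hchart.contDiffAt y hy)
  · exact funext (hH x' hx'.1 a b hx'.2 τ hτ hgraph hsec)

lemma isMorseOn_sub_linear (hσ : Function.Injective σ) (hU : IsMVGraphPlain 2 n d σ U)
    (hf : CrOn 2 U f) (hH : IsGradInSections σ U f H) {a : Fin d → ℝ}
    (ha : a ∉ criticalValues n d U H) :
    IsMorseOn n d U fun x => f x - ∑ i, a i * x (σ i) := by
  intro x hc
  obtain ⟨B, τ, hxB, hτ, hfτ, hHτ⟩ := exists_graphChart hσ hU hf hH hc.1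
  exact hτ.isNondegCritPt hfτ hHτ ha hxB hc

lemma measure_criticalValues_eq_zero (hσ : Function.Injective σ)
    (hU : IsMVGraphPlain 2 n d σ U) (hf : CrOn 2 U f) (hH : IsGradInSections σ U f H) :
    volume (criticalValues n d U H) = 0 := by
  refine measure_image_eq_zero_of_forall_nhds fun x hx => ?_
  obtain ⟨B, τ, hxB, hτ, hfτ, hHτ⟩ := exists_graphChart hσ hU hf hH hx.1
  refine ⟨B, hτ.isOpen.mem_nhds hxB,
    measure_mono_null ?_ (measure_grad_image_degenerate_eq_zero hfτ)⟩
  rintro _ ⟨x', ⟨⟨hx'U, hx'crit⟩, hx'B⟩, rfl⟩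
  have hy : coordProj σ x' ∈ coordProj σ '' B := Set.mem_image_of_mem _ hx'B
  have hG := hasFDerivAt_grad (hfτ _ hy)
  refine ⟨coordProj σ x', ⟨hy, ?_⟩, (hHτ ⟨hx'U, hx'B⟩).symm⟩
  have hrange := hτ.diffImage_eq_range hHτ hy hG.differentiableAt
  rw [hτ.apply_coordProj ⟨hx'U, hx'B⟩, hG.fderiv] at hrange
  rw [hrange, Ne, LinearMap.range_eq_top_iff_det_ne_zero] at hx'crit
  exact not_not.1 hx'crit

end MultiValuedGraph

theorem statement6_general (L : FirstOrder.Language) [L.Structure ℝ]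
    (n d : ℕ) (hd : d ≤ n)
    (U : Set (Fin n → ℝ)) (hU : IsMVGraph L 2 n d (Fin.castLE hd) U)
    (f : (Fin n → ℝ) → ℝ) (hf : CrOn 2 U f)
    (H : (Fin n → ℝ) → Fin d → ℝ)
    (hH : ∀ x ∈ U, ∀ a b : Fin n → ℝ, x ∈ openBox a b →
      ∀ τ : (Fin d → ℝ) → Fin n → ℝ,
        CrOn 2 (coordProj (Fin.castLE hd) '' openBox a b) τ →
        U ∩ openBox a b = τ '' (coordProj (Fin.castLE hd) '' openBox a b) →
        (∀ y ∈ coordProj (Fin.castLE hd) '' openBox a b, coordProj (Fin.castLE hd) (τ y) = y) →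
        ∀ i : Fin d,
          H x i = fderiv ℝ (f ∘ τ) (coordProj (Fin.castLE hd) x) (Pi.single i 1)) :
    (∀ a : Fin d → ℝ, a ∉ criticalValues n d U H →
        IsMorseOn n d U fun x => f x - ∑ i : Fin d, a i * x (Fin.castLE hd i)) ∧
    ∀ ε > (0 : ℝ), ∃ a : Fin d → ℝ, (∀ i, |a i| < ε) ∧ a ∉ criticalValues n d U H :=
  ⟨fun _ ha => isMorseOn_sub_linear (Fin.castLE_injective hd) hU.isMVGraphPlain hf hH ha,
    fun _ hε => exists_forall_abs_lt_notMem_of_measure_eq_zero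
      (measure_criticalValues_eq_zero (Fin.castLE_injective hd) hU.isMVGraphPlain hf hH) hε⟩

theorem statement6 (L : FirstOrder.Language) [L.Structure ℝ]
    (hfield : ExpandsRealOrderedField L) (hdmin : DMinimal L)
    (n d : ℕ) (hd : d ≤ n)
    (U : Set (Fin n → ℝ)) (hU : IsMVGraph L 2 n d (Fin.castLE hd) U)
    (f : (Fin n → ℝ) → ℝ) (hfdef : DefFun L n U f) (hf : CrOn 2 U f)
    (H : (Fin n → ℝ) → Fin d → ℝ)
    (hH : ∀ x ∈ U, ∀ a b : Fin n → ℝ, x ∈ openBox a b →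
      ∀ τ : (Fin d → ℝ) → Fin n → ℝ,
        CrOn 2 (coordProj (Fin.castLE hd) '' openBox a b) τ →
        U ∩ openBox a b = τ '' (coordProj (Fin.castLE hd) '' openBox a b) →
        (∀ y ∈ coordProj (Fin.castLE hd) '' openBox a b, coordProj (Fin.castLE hd) (τ y) = y) →
        ∀ i : Fin d,
          H x i = fderiv ℝ (f ∘ τ) (coordProj (Fin.castLE hd) x) (Pi.single i 1)) :
    (∀ a : Fin d → ℝ, a ∉ criticalValues n d U H →
        IsMorseOn n d U fun x => f x - ∑ i : Fin d, a i * x (Fin.castLE hd i)) ∧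
    ∀ ε > (0 : ℝ), ∃ a : Fin d → ℝ, (∀ i, |a i| < ε) ∧ a ∉ criticalValues n d U H :=
  statement6_general L n d hd U hU f hf H hH

end DMorse
end

section
/- (Fine definable open covering) Let 0 ≤ r < ∞ and let M be a definable C^r submanifold of ℝ^m (definable in a d-minimal expansion of the real ordered field). Let {U_i}_{i=1}^q be a finite cover of M by definable subsets open in M. Then there exist definable subsets V_1,…,V_q of M, each open in M, such that the closure cl_M(V_i) of V_i in M is contained in U_i for each 1 ≤ i ≤ q, and {V_i}_{i=1}^q is again a cover of M. -/
open FirstOrder Filter Topology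

namespace DMorse

/-! On `M`, the function `g i = infDist · (M \ U i)` (or `1` if `M ⊆ U i`) is positive exactly on
the relatively open set `U i`. Let `V i` be the set of points of `M` where no `g j` exceeds
`2 * g i`. At a point of `M` the largest `g i` is positive, so the `V i` cover `M`; on the closure
of `V i` we still have `g j ≤ 2 * g i` for all `j`, and some `g j` is positive there, so `g i` is
positive and the point lies in `U i`. The `V i` are definable because `+`, `·` and `<` are, and
`infDist · A` is a definable function for definable `A`: in the sup metric `dist x a < s` is a
conjunction of coordinatewise inequalities. -/

open Set Metric

lemma dist_lt_iff_forall_lt_add {α : Type*} [Fintype α] {x y : α → ℝ} {s : ℝ} :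
    dist x y < s ↔ 0 < s ∧ ∀ i, x i < y i + s ∧ y i < x i + s := by
  have hcoord : ∀ i, dist (x i) (y i) < s ↔ x i < y i + s ∧ y i < x i + s := fun i => by
    rw [Real.dist_eq, abs_sub_lt_iff, sub_lt_iff_lt_add', sub_lt_iff_lt_add']
  simp_rw [← hcoord]
  exact ⟨fun h => ⟨dist_nonneg.trans_lt h, fun i => (dist_le_pi_dist x y i).trans_lt h⟩,
    fun ⟨hs, h⟩ => (dist_pi_lt_iff hs).2 h⟩

section DominantSet

variable {X ι : Type*}

def dominantSet (g : ι → X → ℝ) (i : ι) : Set X := {x | ∀ j, g j x < 2 * g i x}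

variable {g : ι → X → ℝ}

lemma exists_mem_dominantSet [Finite ι] {x : X} {j : ι} (hj : 0 < g j x) :
    ∃ i, x ∈ dominantSet g i := by
  have : Nonempty ι := ⟨j⟩
  obtain ⟨i, hi⟩ := Finite.exists_max fun j => g j x
  exact ⟨i, fun k => by linarith [hi k, hi j]⟩

variable [TopologicalSpace X]

lemma isOpen_dominantSet [Finite ι] (hg : ∀ j, Continuous (g j)) (i : ι) :
    IsOpen (dominantSet g i) := by
  rw [dominantSet, ofPred_forall]
  exact isOpen_iInter_of_finite fun j => isOpen_lt (hg j) (continuous_const.mul (hg i))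

lemma pos_of_mem_closure_dominantSet (hg : ∀ j, Continuous (g j)) {i j : ι} {x : X}
    (hx : x ∈ closure (dominantSet g i)) (hj : 0 < g j x) : 0 < g i x := by
  have hclosed : IsClosed {x | ∀ j, g j x ≤ 2 * g i x} := by
    rw [ofPred_forall]
    exact isClosed_iInter fun j => isClosed_le (hg j) (continuous_const.mul (hg i))
  have hle := closure_minimal (fun y hy j => (hy j).le) hclosed hx j
  linarith

end DominantSet

namespace ExpandsRealOrderedField

variable {L : Language} [L.Structure ℝ] {α β ι : Type*} (hR : ExpandsRealOrderedField L)
include hR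

section Arithmetic

variable {f g : (α → ℝ) → ℝ}

lemma definableFun_add (hf : (univ : Set ℝ).DefinableFun L f)
    (hg : (univ : Set ℝ).DefinableFun L g) :
    (univ : Set ℝ).DefinableFun L fun v => f v + g v :=
  DefinableFun.comp (f := fun v : Fin 2 → ℝ => v 0 + v 1) (g := fun v => ![f v, g v])
    (by simp [Set.DefinableMap, *]) (hR.1.preimage_comp ![some 0, some 1, none])

lemma definableFun_mul (hf : (univ : Set ℝ).DefinableFun L f)
    (hg : (univ : Set ℝ).DefinableFun L g) :
    (univ : Set ℝ).DefinableFun L fun v => f v * g v :=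
  DefinableFun.comp (f := fun v : Fin 2 → ℝ => v 0 * v 1) (g := fun v => ![f v, g v])
    (by simp [Set.DefinableMap, *]) (hR.2.1.preimage_comp ![some 0, some 1, none])

lemma definable_setOf_lt (hf : (univ : Set ℝ).DefinableFun L f)
    (hg : (univ : Set ℝ).DefinableFun L g) :
    (univ : Set ℝ).Definable L {v | f v < g v} :=
  hR.2.2.preimage_map (F := fun v => ![f v, g v]) (by simp [Set.DefinableMap, *])

end Arithmetic

lemma definable_setOf_dist_lt [Fintype α] {F G : (β → ℝ) → α → ℝ} {h : (β → ℝ) → ℝ}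
    (hF : (univ : Set ℝ).DefinableMap L F) (hG : (univ : Set ℝ).DefinableMap L G)
    (hh : (univ : Set ℝ).DefinableFun L h) :
    (univ : Set ℝ).Definable L {w | dist (F w) (G w) < h w} := by
  simp_rw [dist_lt_iff_forall_lt_add, ofPred_and, ofPred_forall]
  exact (hR.definable_setOf_lt (L.definableFun_const _ (mem_univ 0)) hh).inter
    (definable_iInter_of_finite fun i =>
      (hR.definable_setOf_lt (hF i) (hR.definableFun_add (hG i) hh)).inter
      (hR.definable_setOf_lt (hG i) (hR.definableFun_add (hF i) hh)))

lemma definable_setOf_infDist_lt [Fintype α] [Finite β] {A : Set (α → ℝ)}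
    (hA : (univ : Set ℝ).Definable L A) (hAne : A.Nonempty) {F : (β → ℝ) → α → ℝ}
    {h : (β → ℝ) → ℝ} (hF : (univ : Set ℝ).DefinableMap L F)
    (hh : (univ : Set ℝ).DefinableFun L h) :
    (univ : Set ℝ).Definable L {w | infDist (F w) A < h w} := by
  have hinl : (univ : Set ℝ).DefinableMap L fun u : β ⊕ α → ℝ => u ∘ Sum.inl :=
    fun _ => DefinableFun.proj L
  have hinr : (univ : Set ℝ).DefinableMap L fun u : β ⊕ α → ℝ => u ∘ Sum.inr :=
    fun _ => DefinableFun.proj L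
  have hwitness := ((hA.preimage_comp Sum.inr).inter (hR.definable_setOf_dist_lt
    (fun i => (hF i).comp hinl) hinr (hh.comp hinl))).exists_of_finite
  convert hwitness using 1
  ext w
  simp [infDist_lt_iff hAne]

lemma definableFun_infDist [Fintype α] {A : Set (α → ℝ)} (hA : (univ : Set ℝ).Definable L A) :
    (univ : Set ℝ).DefinableFun L fun x : α → ℝ => infDist x A := by
  rcases A.eq_empty_or_nonempty with rfl | hAne
  · simpa using L.definableFun_const α (mem_univ 0)
  have hge := (hR.definable_setOf_infDist_lt hA hAne (F := fun v : Option α → ℝ => v ∘ some)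
    (fun _ => DefinableFun.proj L) (DefinableFun.proj L (i := none))).compl
  have hle := ((hR.definable_setOf_lt
    (DefinableFun.proj L (i := (Sum.inl none : Option α ⊕ Unit)))
    (DefinableFun.proj L (i := Sum.inr ()))).compl.union
    (hR.definable_setOf_infDist_lt hA hAne (F := fun u i => u (Sum.inl (some i)))
      (fun _ => DefinableFun.proj L) (DefinableFun.proj L (i := Sum.inr ())))).forall_of_finite
  unfold DefinableFun
  convert hge.inter hle using 1
  ext v
  simp only [Function.tupleGraph, mem_ofPred_eq, mem_inter_iff, mem_compl_iff, mem_union,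
    Sum.elim_inl, Sum.elim_inr, not_lt]
  refine ⟨fun h => ⟨h.ge, fun u => (le_or_gt (u ()) (v none)).imp_right (h.trans_lt ·)⟩,
    fun ⟨hge, hle⟩ => le_antisymm ?_ hge⟩
  exact le_of_forall_gt fun s hs => (hle fun _ => s).resolve_left hs.not_ge

lemma exists_definableFun_pos_iff_mem [Fintype α] {M U : Set (α → ℝ)}
    (hM : (univ : Set ℝ).Definable L M) (hU : (univ : Set ℝ).Definable L U)
    (hUopen : ∃ O, IsOpen O ∧ U = M ∩ O) :
    ∃ g : (α → ℝ) → ℝ, Continuous g ∧ (univ : Set ℝ).DefinableFun L g ∧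
      ∀ x ∈ M, 0 < g x ↔ x ∈ U := by
  obtain ⟨O, hO, rfl⟩ := hUopen
  rcases (M \ (M ∩ O)).eq_empty_or_nonempty with hA | hA
  · refine ⟨fun _ => 1, continuous_const, L.definableFun_const _ (mem_univ 1), fun x hx => ?_⟩
    simpa using sdiff_eq_empty.1 hA hx
  refine ⟨fun x => infDist x (M \ (M ∩ O)), continuous_infDist_pt _,
    hR.definableFun_infDist (hM.sdiff hU), fun x hx => ?_⟩
  have hclosure : closure (M \ (M ∩ O)) ⊆ Oᶜ :=
    closure_minimal (fun a ha haO => ha.2 ⟨ha.1, haO⟩) hO.isClosed_compl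
  change 0 < infDist x _ ↔ _
  rw [← infDist_pos_iff_notMem_closure hA]
  exact ⟨fun h => by_contra fun hxO => h (subset_closure ⟨hx, hxO⟩),
    fun h hcl => hclosure hcl h.2⟩

lemma definable_dominantSet [Finite ι] {g : ι → (α → ℝ) → ℝ}
    (hg : ∀ j, (univ : Set ℝ).DefinableFun L (g j)) (i : ι) :
    (univ : Set ℝ).Definable L (dominantSet g i) := by
  rw [dominantSet, ofPred_forall]
  exact definable_iInter_of_finite fun j => hR.definable_setOf_lt (hg j)
    (hR.definableFun_mul (L.definableFun_const _ (mem_univ 2)) (hg i))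

end ExpandsRealOrderedField

theorem statement10_general (L : FirstOrder.Language) [L.Structure ℝ]
    (hfield : ExpandsRealOrderedField L)
    (r m k q : ℕ) (M : Set (Fin m → ℝ)) (hM : IsDefCrSubmanifold L r m k M)
    (U : Fin q → Set (Fin m → ℝ))
    (hUdef : ∀ i, Def L m (U i))
    (hUopen : ∀ i, ∃ O : Set (Fin m → ℝ), IsOpen O ∧ U i = M ∩ O)
    (hUcover : M ⊆ ⋃ i, U i) :
    ∃ V : Fin q → Set (Fin m → ℝ),
      (∀ i, Def L m (V i)) ∧ (∀ i, V i ⊆ M) ∧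
      (∀ i, ∃ O : Set (Fin m → ℝ), IsOpen O ∧ V i = M ∩ O) ∧
      (∀ i, M ∩ closure (V i) ⊆ U i) ∧ M ⊆ ⋃ i, V i := by
  choose g hg_cont hg_def hg_pos using
    fun i => hfield.exists_definableFun_pos_iff_mem hM.1 (hUdef i) (hUopen i)
  refine ⟨fun i => M ∩ dominantSet g i,
    fun i => hM.1.inter (hfield.definable_dominantSet hg_def i),
    fun i => inter_subset_left, fun i => ⟨_, isOpen_dominantSet hg_cont i, rfl⟩,
    fun i x ⟨hxM, hx⟩ => ?_, fun x hxM => ?_⟩ <;>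
  obtain ⟨j, hxj⟩ := mem_iUnion.1 (hUcover hxM)
  · exact (hg_pos i x hxM).1 <| pos_of_mem_closure_dominantSet hg_cont
      (closure_mono inter_subset_right hx) ((hg_pos j x hxM).2 hxj)
  · obtain ⟨i, hi⟩ := exists_mem_dominantSet ((hg_pos j x hxM).2 hxj)
    exact mem_iUnion.2 ⟨i, hxM, hi⟩

theorem statement10 (L : FirstOrder.Language) [L.Structure ℝ]
    (hfield : ExpandsRealOrderedField L) (hdmin : DMinimal L)
    (r m k q : ℕ) (M : Set (Fin m → ℝ)) (hM : IsDefCrSubmanifold L r m k M)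
    (U : Fin q → Set (Fin m → ℝ))
    (hUdef : ∀ i, Def L m (U i)) (hUsub : ∀ i, U i ⊆ M)
    (hUopen : ∀ i, ∃ O : Set (Fin m → ℝ), IsOpen O ∧ U i = M ∩ O)
    (hUcover : M ⊆ ⋃ i, U i) :
    ∃ V : Fin q → Set (Fin m → ℝ),
      (∀ i, Def L m (V i)) ∧ (∀ i, V i ⊆ M) ∧
      (∀ i, ∃ O : Set (Fin m → ℝ), IsOpen O ∧ V i = M ∩ O) ∧
      (∀ i, M ∩ closure (V i) ⊆ U i) ∧ M ⊆ ⋃ i, V i :=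
  statement10_general L hfield r m k q M hM U hUdef hUopen hUcover

end DMorse
end

section
/- (Quantitative stability of nondegeneracy) Let M be a d-dimensional C^2 submanifold of ℝ^n and let C ⊆ M be a compact subset contained in a C^2 multi-valued graph with respect to the coordinate projection onto the coordinates indexed by σ(1) < … < σ(d). Let h : M → ℝ be a C^2 function with no degenerate critical point on C, and suppose K, L > 0 satisfy: Σ_{j=1}^d |D_{σ(j)}h| + |det(D_{σ(j1)}D_{σ(j2)}h)_{1≤j1,j2≤d}| > K on C, and |D_{σ(j1)}D_{σ(j2)}h| < L on C for all j1, j2. Let ε > 0 satisfy d!((L+ε)^d − L^d) + dε < K. Then every C^2 function g : M → ℝ with |D_{σ(j)}(g−h)| < ε and |D_{σ(j1)}D_{σ(j2)}(g−h)| < ε on C for all j, j1, j2 satisfies Σ_{j=1}^d |D_{σ(j)}g| + |det(D_{σ(j1)}D_{σ(j2)}g)_{1≤j1,j2≤d}| > 0 everywhere on C; consequently g has no degenerate critical point on C. -/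
/-!
Write `Φ(g) = ∑ⱼ |D_{σ j} g| + |det (D_{σ j₁} D_{σ j₂} g)|`. Perturbing each first derivative by
less than `ε` moves the sum by less than `d ε`; the determinant is a signed sum of `d!` products
of `d` entries bounded by `L`, and perturbing each entry by less than `ε` moves such a product by
at most `(L + ε)^d - L^d`. Hence `Φ(g) > K - d! ((L + ε)^d - L^d) - d ε > 0`, and at a critical
point of `g`, where all `D_j g` vanish, the Hessian determinant cannot vanish.

The analytic input is `D_j (g - h) = D_j g - D_j h`, to second order. At second order this needs
`D_j g` itself to be differentiable along `M`: in a chart, the orthogonal projection onto the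
tangent space is `Fᵀ (F Fᵀ)⁻¹ F` for the frame `F` of coordinate images, which is differentiable.
-/

open FirstOrder Filter Topology

namespace DMorse

open Matrix

theorem abs_prod_sub_prod_le {ι : Type*} (s : Finset ι) {a b : ι → ℝ} {L ε : ℝ}
    (ha : ∀ i ∈ s, |a i| ≤ L) (hab : ∀ i ∈ s, |b i - a i| ≤ ε) :
    |∏ i ∈ s, b i - ∏ i ∈ s, a i| ≤ (L + ε) ^ s.card - L ^ s.card := by
  induction s using Finset.cons_induction with
  | empty => simp
  | cons i s his ih =>
    have hai := ha i (s.mem_cons_self i)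
    have hbai := hab i (s.mem_cons_self i)
    have hbi : |b i| ≤ L + ε := by linarith [abs_sub_abs_le_abs_sub (b i) (a i)]
    have hpa : |∏ j ∈ s, a j| ≤ L ^ s.card := by
      rw [Finset.abs_prod, ← Finset.prod_const]
      exact Finset.prod_le_prod (fun _ _ => abs_nonneg _) fun j hj => ha j (s.mem_cons_of_mem hj)
    have ih := ih (fun j hj => ha j (s.mem_cons_of_mem hj))
      (fun j hj => hab j (s.mem_cons_of_mem hj))
    rw [Finset.prod_cons, Finset.prod_cons, Finset.card_cons]
    calc |b i * ∏ j ∈ s, b j - a i * ∏ j ∈ s, a j|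
        = |b i * (∏ j ∈ s, b j - ∏ j ∈ s, a j) + (b i - a i) * ∏ j ∈ s, a j| := by ring_nf
      _ ≤ |b i| * |∏ j ∈ s, b j - ∏ j ∈ s, a j| + |b i - a i| * |∏ j ∈ s, a j| :=
          (abs_add_le _ _).trans_eq (by rw [abs_mul, abs_mul])
      _ ≤ (L + ε) * ((L + ε) ^ s.card - L ^ s.card) + ε * L ^ s.card := by
          gcongr
          · exact (abs_nonneg _).trans hbi
          · exact (abs_nonneg _).trans hbai
      _ = (L + ε) ^ (s.card + 1) - L ^ (s.card + 1) := by ring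

section Det

variable {ι : Type*} [Fintype ι] [DecidableEq ι]

theorem abs_det_sub_det_le {A B : Matrix ι ι ℝ} {L ε : ℝ} (hA : ∀ i j, |A i j| ≤ L)
    (hAB : ∀ i j, |B i j - A i j| ≤ ε) :
    |B.det - A.det| ≤
      (Fintype.card ι).factorial * ((L + ε) ^ Fintype.card ι - L ^ Fintype.card ι) := by
  have hterm (σ : Equiv.Perm ι) :
      |(Equiv.Perm.sign σ : ℝ) * ∏ i, B (σ i) i - (Equiv.Perm.sign σ : ℝ) * ∏ i, A (σ i) i|
        ≤ (L + ε) ^ Fintype.card ι - L ^ Fintype.card ι := by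
    have hsign : |((Equiv.Perm.sign σ : ℤ) : ℝ)| = 1 := by
      rcases Int.units_eq_one_or (Equiv.Perm.sign σ) with h | h <;> simp [h]
    rw [← mul_sub, abs_mul, hsign, one_mul]
    exact abs_prod_sub_prod_le _ (fun i _ => hA _ _) (fun i _ => hAB _ _)
  rw [det_apply', det_apply', ← Finset.sum_sub_distrib]
  refine (Finset.abs_sum_le_sum_abs _ _).trans ((Finset.sum_le_sum fun σ _ => hterm σ).trans ?_)
  rw [Finset.sum_const, Finset.card_univ, Fintype.card_perm, nsmul_eq_mul]

theorem sum_abs_add_abs_det_sub_le {u w : ι → ℝ} {A B : Matrix ι ι ℝ} {L ε : ℝ}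
    (huw : ∀ i, |w i - u i| ≤ ε) (hA : ∀ i j, |A i j| ≤ L)
    (hAB : ∀ i j, |B i j - A i j| ≤ ε) :
    (∑ i, |u i|) + |A.det| - (Fintype.card ι * ε +
        (Fintype.card ι).factorial * ((L + ε) ^ Fintype.card ι - L ^ Fintype.card ι)) ≤
      (∑ i, |w i|) + |B.det| := by
  have hsum : ∑ i, |u i| - Fintype.card ι * ε ≤ ∑ i, |w i| := by
    have := Finset.sum_le_sum fun i (_ : i ∈ Finset.univ) =>
      (abs_sub_abs_le_abs_sub (u i) (w i)).trans ((abs_sub_comm _ _).trans_le (huw i))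
    simp only [Finset.sum_sub_distrib, Finset.sum_const, Finset.card_univ, nsmul_eq_mul] at this
    linarith
  linarith [abs_det_sub_det_le hA hAB, abs_sub_abs_le_abs_sub A.det B.det,
    abs_sub_comm A.det B.det]

variable {E : Type*} [NormedAddCommGroup E] [NormedSpace ℝ E] {x : E}

theorem differentiableAt_det {A : E → Matrix ι ι ℝ}
    (hA : ∀ i j, DifferentiableAt ℝ (fun y => A y i j) x) :
    DifferentiableAt ℝ (fun y => (A y).det) x := by
  simp only [det_apply']
  refine DifferentiableAt.fun_sum fun σ _ => (differentiableAt_const _).mul ?_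
  exact (HasFDerivAt.finsetProd fun i _ => (hA (σ i) i).hasFDerivAt).differentiableAt

end Det

section OrthProj

variable {ι : Type*} [Fintype ι] {n : ℕ}

theorem mem_span_range_row_iff {F : Matrix ι (Fin n) ℝ} {w : Fin n → ℝ} :
    w ∈ Submodule.span ℝ (Set.range F.row) ↔ ∃ c, Fᵀ *ᵥ c = w := by
  rw [Submodule.mem_span_range_iff_exists_fun]
  simp only [mulVec_transpose, vecMul_eq_sum, row]

variable [DecidableEq ι]

theorem det_mul_transpose_ne_zero {F : Matrix ι (Fin n) ℝ} (hF : LinearIndependent ℝ F.row) :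
    (F * Fᵀ).det ≠ 0 := by
  intro h
  obtain ⟨c, hc, hFc⟩ := exists_mulVec_eq_zero_iff.2 h
  have hker : c ∈ LinearMap.ker (mulVecLin Fᵀ) := by
    rw [← ker_mulVecLin_transpose_mul_self, transpose_transpose]
    exact hFc
  rw [LinearMap.mem_ker, mulVecLin_apply, mulVec_transpose, vecMul_eq_sum] at hker
  exact hc (funext (Fintype.linearIndependent_iff.1 hF c hker))

/-- `Fᵀ (F Fᵀ)⁻¹ F v`, with the inverse written by Cramer's rule so that the smooth dependence
on `F` is visible. -/
noncomputable def orthProj (F : Matrix ι (Fin n) ℝ) (v : Fin n → ℝ) : Fin n → ℝ :=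
  Fᵀ *ᵥ ((F * Fᵀ).det⁻¹ • (F * Fᵀ).cramer (F *ᵥ v))

theorem mulVec_orthProj {F : Matrix ι (Fin n) ℝ} (hF : (F * Fᵀ).det ≠ 0) (v : Fin n → ℝ) :
    F *ᵥ orthProj F v = F *ᵥ v := by
  rw [orthProj, mulVec_mulVec, mulVec_smul, mulVec_cramer, smul_smul, inv_mul_cancel₀ hF,
    one_smul]

theorem isOrthProjOnto_orthProj {F : Matrix ι (Fin n) ℝ} (hF : LinearIndependent ℝ F.row)
    (v : Fin n → ℝ) : IsOrthProjOnto (Submodule.span ℝ (Set.range F.row)) v (orthProj F v) := by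
  refine ⟨mem_span_range_row_iff.2 ⟨_, rfl⟩, fun w hw => ?_⟩
  obtain ⟨c, rfl⟩ := mem_span_range_row_iff.1 hw
  change (v - orthProj F v) ⬝ᵥ (Fᵀ *ᵥ c) = 0
  rw [dotProduct_mulVec, vecMul_transpose, mulVec_sub,
    mulVec_orthProj (det_mul_transpose_ne_zero hF), sub_self, zero_dotProduct]

theorem differentiableAt_orthProj {E : Type*} [NormedAddCommGroup E] [NormedSpace ℝ E] {x : E}
    {F : E → Matrix ι (Fin n) ℝ} (hF : ∀ i k, DifferentiableAt ℝ (fun y => F y i k) x)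
    (hdet : (F x * (F x)ᵀ).det ≠ 0) (v : Fin n → ℝ) :
    DifferentiableAt ℝ (fun y => orthProj (F y) v) x := by
  have hG : ∀ i j, DifferentiableAt ℝ (fun y => (F y * (F y)ᵀ) i j) x := by
    intro i j
    simp only [mul_apply, transpose_apply]
    exact DifferentiableAt.fun_sum fun k _ => (hF i k).mul (hF j k)
  have hcramer : ∀ i, DifferentiableAt ℝ (fun y => (F y * (F y)ᵀ).cramer (F y *ᵥ v) i) x := by
    intro i
    simp only [cramer_apply]
    refine differentiableAt_det fun k l => ?_
    simp only [updateCol_apply]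
    split_ifs
    · simp only [mulVec, dotProduct]
      exact DifferentiableAt.fun_sum fun k' _ => (hF k k').mul (differentiableAt_const _)
    · exact hG k l
  refine differentiableAt_pi.2 fun k => ?_
  simp only [orthProj, mulVec, dotProduct, transpose_apply, Pi.smul_apply, smul_eq_mul]
  exact DifferentiableAt.fun_sum fun i _ => (hF i k).mul
    (((differentiableAt_det hG).inv hdet).mul (hcramer i))

end OrthProj

theorem sum_lt_smul_single_eq_self {n d : ℕ} {u : Fin n → ℝ}
    (hu : ∀ i : Fin n, d ≤ (i : ℕ) → u i = 0) :
    ∑ l : {l : Fin n // (l : ℕ) < d}, u l.1 • (Pi.single l.1 1 : Fin n → ℝ) = u := by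
  rw [← Finset.sum_subtype (Finset.univ.filter fun i : Fin n => (i : ℕ) < d) (by simp)
    (fun i => u i • (Pi.single i 1 : Fin n → ℝ)), Finset.sum_filter_of_ne, ← pi_eq_sum_univ']
  exact fun i _ hi => not_le.1 fun h => hi (by rw [hu i h, zero_smul])

structure IsFlatChart (r n d : ℕ) (M U V : Set (Fin n → ℝ))
    (φ ψ : (Fin n → ℝ) → Fin n → ℝ) : Prop where
  isOpen_source : IsOpen U
  isOpen_target : IsOpen V
  contDiffOn : ContDiffOn ℝ r φ U
  contDiffOn_inv : ContDiffOn ℝ r ψ V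
  mapsTo : Set.MapsTo φ U V
  mapsTo_inv : Set.MapsTo ψ V U
  left_inv : ∀ y ∈ U, ψ (φ y) = y
  right_inv : ∀ z ∈ V, φ (ψ z) = z
  inter_eq : M ∩ U = U ∩ φ ⁻¹' {z | ∀ i : Fin n, d ≤ (i : ℕ) → z i = 0}

theorem IsCrSubmanifold.exists_isFlatChart {r n d : ℕ} {M : Set (Fin n → ℝ)}
    (hM : IsCrSubmanifold r n d M) {x : Fin n → ℝ} (hx : x ∈ M) :
    ∃ U V φ ψ, x ∈ U ∧ IsFlatChart r n d M U V φ ψ := by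
  obtain ⟨U, V, φ, ψ, hU, hxU, hV, hφ, hψ, hφUV, hψVU, h1, h2, -, hMU⟩ := hM x hx
  exact ⟨U, V, φ, ψ, hxU, hU, hV, hφ, hψ, hφUV, hψVU, h1, h2, hMU⟩

noncomputable def chartFrame {n : ℕ} (d : ℕ) (φ ψ : (Fin n → ℝ) → Fin n → ℝ)
    (y : Fin n → ℝ) : Matrix {l : Fin n // (l : ℕ) < d} (Fin n) ℝ :=
  Matrix.of fun l => fderiv ℝ ψ (φ y) (Pi.single l.1 1)

namespace IsFlatChart

variable {r n d : ℕ} {M U V : Set (Fin n → ℝ)} {φ ψ : (Fin n → ℝ) → Fin n → ℝ}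
  {y : Fin n → ℝ}

theorem mem_iff (c : IsFlatChart r n d M U V φ ψ) (hy : y ∈ U) :
    y ∈ M ↔ ∀ i : Fin n, d ≤ (i : ℕ) → φ y i = 0 := by
  simpa [hy] using Set.ext_iff.1 c.inter_eq y

theorem differentiableAt (c : IsFlatChart r n d M U V φ ψ) (hr : 1 ≤ r) (hy : y ∈ U) :
    DifferentiableAt ℝ φ y :=
  (c.contDiffOn.contDiffAt (c.isOpen_source.mem_nhds hy)).differentiableAt (by norm_cast; omega)

theorem differentiableAt_inv (c : IsFlatChart r n d M U V φ ψ) (hr : 1 ≤ r) {z : Fin n → ℝ}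
    (hz : z ∈ V) : DifferentiableAt ℝ ψ z :=
  (c.contDiffOn_inv.contDiffAt (c.isOpen_target.mem_nhds hz)).differentiableAt
    (by norm_cast; omega)

theorem fderiv_apply_fderiv_inv (c : IsFlatChart r n d M U V φ ψ) (hr : 1 ≤ r) (hy : y ∈ U)
    (w : Fin n → ℝ) : fderiv ℝ φ y (fderiv ℝ ψ (φ y) w) = w := by
  have hφ : HasFDerivAt φ (fderiv ℝ φ y) (ψ (φ y)) := by
    rw [c.left_inv y hy]; exact (c.differentiableAt hr hy).hasFDerivAt
  have hcomp := hφ.comp (φ y) (c.differentiableAt_inv hr (c.mapsTo hy)).hasFDerivAt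
  have hid : φ ∘ ψ =ᶠ[𝓝 (φ y)] id :=
    Filter.mem_of_superset (c.isOpen_target.mem_nhds (c.mapsTo hy)) c.right_inv
  exact DFunLike.congr_fun ((hcomp.congr_of_eventuallyEq hid.symm).unique (hasFDerivAt_id _)) w

theorem linearIndependent_chartFrame (c : IsFlatChart r n d M U V φ ψ) (hr : 1 ≤ r)
    (hy : y ∈ U) : LinearIndependent ℝ (chartFrame d φ ψ y).row := by
  refine LinearIndependent.of_comp (fderiv ℝ φ y : (Fin n → ℝ) →ₗ[ℝ] Fin n → ℝ) ?_
  have : (fderiv ℝ φ y : (Fin n → ℝ) →ₗ[ℝ] Fin n → ℝ) ∘ (chartFrame d φ ψ y).row =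
      fun l => Pi.single l.1 1 :=
    funext fun l => c.fderiv_apply_fderiv_inv hr hy _
  rw [this]
  exact (Pi.linearIndependent_single_one (Fin n) ℝ).comp _ Subtype.val_injective

theorem differentiableAt_chartFrame (c : IsFlatChart r n d M U V φ ψ) (hr : 2 ≤ r)
    {x : Fin n → ℝ} (hx : x ∈ U) (l k) :
    DifferentiableAt ℝ (fun y => chartFrame d φ ψ y l k) x := by
  have hψ' : DifferentiableAt ℝ (fderiv ℝ ψ) (φ x) :=
    ((c.contDiffOn_inv.contDiffAt (c.isOpen_target.mem_nhds (c.mapsTo hx))).fderiv_right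
      (m := 1) (by exact_mod_cast hr)).differentiableAt one_ne_zero
  have hrow := (hψ'.comp x (c.differentiableAt (by omega) hx)).clm_apply
    (differentiableAt_const (Pi.single l.1 (1 : ℝ)))
  exact differentiableAt_pi.1 hrow k

theorem row_chartFrame_mem_curveDerivs (c : IsFlatChart r n d M U V φ ψ) (hr : 1 ≤ r)
    (hy : y ∈ M ∩ U) (l : {l : Fin n // (l : ℕ) < d}) :
    (chartFrame d φ ψ y).row l ∈ curveDerivs n M y := by
  set e : Fin n → ℝ := Pi.single l.1 1
  have hline : HasDerivAt (fun t : ℝ => φ y + t • e) e 0 := by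
    simpa using ((hasDerivAt_id (0 : ℝ)).smul_const e).const_add (φ y)
  have hV : ∀ᶠ t in 𝓝 (0 : ℝ), φ y + t • e ∈ V :=
    hline.continuousAt.preimage_mem_nhds
      (by simpa using c.isOpen_target.mem_nhds (c.mapsTo hy.2))
  refine ⟨fun t => ψ (φ y + t • e), by simpa using c.left_inv y hy.2, ?_, ?_⟩
  · filter_upwards [hV] with t ht
    rw [c.mem_iff (c.mapsTo_inv ht), c.right_inv _ ht]
    intro i hi
    have hil : i ≠ l.1 := fun h => by have := l.2; omega
    simp [e, (c.mem_iff hy.2).1 hy.1 i hi, hil]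
  · have hψ : HasFDerivAt ψ (fderiv ℝ ψ (φ y)) (φ y + (0 : ℝ) • e) := by
      simpa using (c.differentiableAt_inv hr (c.mapsTo hy.2)).hasFDerivAt
    exact hψ.comp_hasDerivAt (0 : ℝ) hline

theorem mem_span_chartFrame (c : IsFlatChart r n d M U V φ ψ) (hr : 1 ≤ r) (hy : y ∈ M ∩ U)
    {v : Fin n → ℝ} (hv : v ∈ curveDerivs n M y) :
    v ∈ Submodule.span ℝ (Set.range (chartFrame d φ ψ y).row) := by
  obtain ⟨γ, hγ0, hγM, hγ⟩ := hv
  have hγU : ∀ᶠ t in 𝓝 (0 : ℝ), γ t ∈ U :=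
    hγ.continuousAt.preimage_mem_nhds (by rw [hγ0]; exact c.isOpen_source.mem_nhds hy.2)
  set u := fderiv ℝ φ y v
  have hφγ : HasDerivAt (φ ∘ γ) u 0 := by
    have hφ : HasFDerivAt φ (fderiv ℝ φ y) (γ 0) := by
      rw [hγ0]; exact (c.differentiableAt hr hy.2).hasFDerivAt
    exact hφ.comp_hasDerivAt 0 hγ
  have hu : ∀ i : Fin n, d ≤ (i : ℕ) → u i = 0 := by
    intro i hi
    have hzero : (fun t => (φ ∘ γ) t i) =ᶠ[𝓝 0] fun _ => 0 := by
      filter_upwards [hγM, hγU] with t htM htU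
      exact (c.mem_iff htU).1 htM i hi
    exact ((hasDerivAt_pi.1 hφγ i).congr_of_eventuallyEq hzero.symm).unique
      (hasDerivAt_const 0 0)
  have hψu : fderiv ℝ ψ (φ y) u = v := by
    have hψ : HasFDerivAt ψ (fderiv ℝ ψ (φ y)) ((φ ∘ γ) 0) := by
      simpa [hγ0] using (c.differentiableAt_inv hr (c.mapsTo hy.2)).hasFDerivAt
    have hψφγ : ψ ∘ φ ∘ γ =ᶠ[𝓝 0] γ := by
      filter_upwards [hγU] with t ht
      exact c.left_inv _ ht
    exact ((hψ.comp_hasDerivAt 0 hφγ).congr_of_eventuallyEq hψφγ.symm).unique hγ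
  rw [Submodule.mem_span_range_iff_exists_fun]
  refine ⟨fun l => u l.1, ?_⟩
  conv_rhs => rw [← hψu, ← sum_lt_smul_single_eq_self hu, map_sum]
  simp only [map_smul]
  rfl

theorem tangentAt_eq (c : IsFlatChart r n d M U V φ ψ) (hr : 1 ≤ r) (hy : y ∈ M ∩ U) :
    TangentAt n M y = Submodule.span ℝ (Set.range (chartFrame d φ ψ y).row) := by
  refine le_antisymm (Submodule.span_le.2 fun v hv => c.mem_span_chartFrame hr hy hv) ?_
  rw [Submodule.span_le]
  rintro _ ⟨l, rfl⟩
  exact Submodule.subset_span (c.row_chartFrame_mem_curveDerivs hr hy l)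

end IsFlatChart

theorem IsCrSubmanifold.exists_differentiableAt_isOrthProjOnto {r n d : ℕ}
    {M : Set (Fin n → ℝ)} (hM : IsCrSubmanifold r n d M) (hr : 2 ≤ r) {x : Fin n → ℝ}
    (hx : x ∈ M) (v : Fin n → ℝ) :
    ∃ q : (Fin n → ℝ) → Fin n → ℝ, DifferentiableAt ℝ q x ∧
      ∀ᶠ y in 𝓝[M] x, IsOrthProjOnto (TangentAt n M y) v (q y) := by
  obtain ⟨U, V, φ, ψ, hxU, c⟩ := hM.exists_isFlatChart hx
  refine ⟨fun y => orthProj (chartFrame d φ ψ y) v,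
    differentiableAt_orthProj (c.differentiableAt_chartFrame hr hxU)
      (det_mul_transpose_ne_zero (c.linearIndependent_chartFrame (by omega) hxU)) v, ?_⟩
  filter_upwards [inter_mem_nhdsWithin M (c.isOpen_source.mem_nhds hxU)] with y hy
  rw [c.tangentAt_eq (by omega) hy]
  exact isOrthProjOnto_orthProj (c.linearIndependent_chartFrame (by omega) hy.2) v

theorem IsCrSubmanifold.exists_isOrthProjOnto {r n d : ℕ} {M : Set (Fin n → ℝ)}
    (hM : IsCrSubmanifold r n d M) (hr : 1 ≤ r) {x : Fin n → ℝ} (hx : x ∈ M)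
    (v : Fin n → ℝ) : ∃ p, IsOrthProjOnto (TangentAt n M x) v p := by
  obtain ⟨U, V, φ, ψ, hxU, c⟩ := hM.exists_isFlatChart hx
  rw [c.tangentAt_eq hr ⟨hx, hxU⟩]
  exact ⟨_, isOrthProjOnto_orthProj (c.linearIndependent_chartFrame hr hxU) v⟩

theorem _root_.Set.EqOn.eventuallyEq_nhdsWithin_of_isOpen {α β : Type*} [TopologicalSpace α]
    {s U : Set α} {f g : α → β} {x : α} (h : Set.EqOn f g (s ∩ U)) (hU : IsOpen U)
    (hx : x ∈ U) : f =ᶠ[𝓝[s] x] g := by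
  rw [nhdsWithin_restrict s hx hU]
  exact h.eventuallyEq_nhdsWithin

def HasDifferentiableExtensionAt {n : ℕ} (M : Set (Fin n → ℝ)) (f : (Fin n → ℝ) → ℝ)
    (x : Fin n → ℝ) : Prop :=
  ∃ F : (Fin n → ℝ) → ℝ, DifferentiableAt ℝ F x ∧ f =ᶠ[𝓝[M] x] F

section DerivAlong

variable {n : ℕ} {M : Set (Fin n → ℝ)} {f g : (Fin n → ℝ) → ℝ} {x v : Fin n → ℝ}

theorem CrOn.hasDifferentiableExtensionAt {r : ℕ} (hf : CrOn r M f) (hr : 1 ≤ r)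
    (hx : x ∈ M) : HasDifferentiableExtensionAt M f x := by
  obtain ⟨U, hU, hxU, F, hF, hFf⟩ := hf.2 hr x hx
  exact ⟨F, (hF.contDiffAt (hU.mem_nhds hxU)).differentiableAt (by norm_cast; omega),
    hFf.symm.eventuallyEq_nhdsWithin_of_isOpen hU hxU⟩

theorem HasDerivAlong.eq_fderiv {c : ℝ} (h : HasDerivAlong n M f x v c)
    {F : (Fin n → ℝ) → ℝ} (hF : DifferentiableAt ℝ F x) (hfF : f =ᶠ[𝓝[M] x] F) :
    c = fderiv ℝ F x v := by
  obtain ⟨γ, hγ0, hγM, hγ, hfγ⟩ := h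
  have hγx : Tendsto γ (𝓝 0) (𝓝[M] x) :=
    tendsto_nhdsWithin_iff.2 ⟨hγ0 ▸ hγ.continuousAt.tendsto, hγM⟩
  have hF' : HasFDerivAt F (fderiv ℝ F x) (γ 0) := hγ0 ▸ hF.hasFDerivAt
  exact hfγ.unique ((hF'.comp_hasDerivAt 0 hγ).congr_of_eventuallyEq (hγx.eventually hfF))

theorem HasDerivAlong.congr {c : ℝ} (h : HasDerivAlong n M f x v c) (hfg : Set.EqOn f g M) :
    HasDerivAlong n M g x v c := by
  obtain ⟨γ, hγ0, hγM, hγ, hfγ⟩ := h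
  refine ⟨γ, hγ0, hγM, hγ, hfγ.congr_of_eventuallyEq ?_⟩
  filter_upwards [hγM] with t ht using (hfg ht).symm

theorem HasDerivAlong.eq_sub {a b c : ℝ} (hc : HasDerivAlong n M (fun y => f y - g y) x v c)
    (hf : HasDifferentiableExtensionAt M f x) (hg : HasDifferentiableExtensionAt M g x)
    (ha : HasDerivAlong n M f x v a) (hb : HasDerivAlong n M g x v b) : c = a - b := by
  obtain ⟨F, hF, hfF⟩ := hf
  obtain ⟨G, hG, hgG⟩ := hg
  rw [ha.eq_fderiv hF hfF, hb.eq_fderiv hG hgG, hc.eq_fderiv (hF.sub hG) (hfF.sub hgG),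
    fderiv_sub hF hG]
  rfl

end DerivAlong

namespace IsDerivField

variable {n : ℕ} {M : Set (Fin n → ℝ)} {f g D Df Dg : (Fin n → ℝ) → ℝ} {j : Fin n}

theorem congr (hD : IsDerivField n M f j D) (hfg : Set.EqOn f g M) : IsDerivField n M g j D :=
  fun x hx p hp => (hD x hx p hp).congr hfg

theorem eqOn_sub (hD : IsDerivField n M (fun x => f x - g x) j D) (hDf : IsDerivField n M f j Df)
    (hDg : IsDerivField n M g j Dg)
    (hp : ∀ x ∈ M, ∃ p, IsOrthProjOnto (TangentAt n M x) (Pi.single j 1) p)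
    (hf : ∀ x ∈ M, HasDifferentiableExtensionAt M f x)
    (hg : ∀ x ∈ M, HasDifferentiableExtensionAt M g x) :
    Set.EqOn D (fun x => Df x - Dg x) M := by
  intro x hx
  obtain ⟨p, hp⟩ := hp x hx
  exact (hD x hx p hp).eq_sub (hf x hx) (hg x hx) (hDf x hx p hp) (hDg x hx p hp)

theorem hasDifferentiableExtensionAt {r d : ℕ} (hD : IsDerivField n M f j D)
    (hM : IsCrSubmanifold r n d M) (hr : 2 ≤ r) (hf : CrOn r M f) {x : Fin n → ℝ}
    (hx : x ∈ M) : HasDifferentiableExtensionAt M D x := by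
  obtain ⟨q, hq, hqproj⟩ := hM.exists_differentiableAt_isOrthProjOnto hr hx (Pi.single j 1)
  obtain ⟨U, hU, hxU, F, hF, hFf⟩ := hf.2 (by omega) x hx
  have hdF : DifferentiableAt ℝ (fderiv ℝ F) x :=
    ((hF.contDiffAt (hU.mem_nhds hxU)).fderiv_right (m := 1) (by exact_mod_cast hr)
      ).differentiableAt one_ne_zero
  refine ⟨fun y => fderiv ℝ F y (q y), hdF.clm_apply hq, ?_⟩
  filter_upwards [hqproj, inter_mem_nhdsWithin M (hU.mem_nhds hxU)] with y hy ⟨hyM, hyU⟩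
  exact (hD y hyM _ hy).eq_fderiv
    ((hF.contDiffAt (hU.mem_nhds hyU)).differentiableAt (by norm_cast; omega))
    (hFf.symm.eventuallyEq_nhdsWithin_of_isOpen hU hyU)

theorem eq_zero_of_isCriticalPt (hD : IsDerivField n M f j D) {x : Fin n → ℝ}
    (hp : ∃ p, IsOrthProjOnto (TangentAt n M x) (Pi.single j 1) p) (hx : IsCriticalPt n M f x) :
    D x = 0 := by
  obtain ⟨p, hp⟩ := hp
  obtain ⟨γ, hγ0, hγM, hγ, hfγ⟩ := hD x hx.1 p hp
  exact hfγ.unique (hx.2 γ p hγ0 hγM hγ)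

end IsDerivField

theorem statement11_general (n d : ℕ) (M : Set (Fin n → ℝ)) (hM : IsCrSubmanifold 2 n d M)
    (σ : Fin d → Fin n)
    (C : Set (Fin n → ℝ)) (hCM : C ⊆ M)
    (h g : (Fin n → ℝ) → ℝ) (hh : CrOn 2 M h) (hg : CrOn 2 M g)
    (Dh : Fin n → (Fin n → ℝ) → ℝ) (hDh : ∀ j, IsDerivField n M h j (Dh j))
    (DDh : Fin n → Fin n → (Fin n → ℝ) → ℝ)
    (hDDh : ∀ j1 j2, IsDerivField n M (Dh j2) j1 (DDh j1 j2))
    (Dg : Fin n → (Fin n → ℝ) → ℝ) (hDg : ∀ j, IsDerivField n M g j (Dg j))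
    (DDg : Fin n → Fin n → (Fin n → ℝ) → ℝ)
    (hDDg : ∀ j1 j2, IsDerivField n M (Dg j2) j1 (DDg j1 j2))
    (Dφ : Fin n → (Fin n → ℝ) → ℝ)
    (hDφ : ∀ j, IsDerivField n M (fun x => g x - h x) j (Dφ j))
    (DDφ : Fin n → Fin n → (Fin n → ℝ) → ℝ)
    (hDDφ : ∀ j1 j2, IsDerivField n M (Dφ j2) j1 (DDφ j1 j2))
    (K Lb ε : ℝ)
    (hKbound : ∀ x ∈ C,
      K < (∑ j : Fin d, |Dh (σ j) x|) +
        |(Matrix.of fun j1 j2 : Fin d => DDh (σ j1) (σ j2) x).det|)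
    (hLbound : ∀ x ∈ C, ∀ j1 j2 : Fin d, |DDh (σ j1) (σ j2) x| < Lb)
    (hεsmall : (d.factorial : ℝ) * ((Lb + ε) ^ d - Lb ^ d) + d * ε < K)
    (hd1 : ∀ j : Fin d, ∀ x ∈ C, |Dφ (σ j) x| < ε)
    (hd2 : ∀ j1 j2 : Fin d, ∀ x ∈ C, |DDφ (σ j1) (σ j2) x| < ε) :
    (∀ x ∈ C, 0 < (∑ j : Fin d, |Dg (σ j) x|) +
        |(Matrix.of fun j1 j2 : Fin d => DDg (σ j1) (σ j2) x).det|) ∧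
    ∀ x ∈ C, IsCriticalPt n M g x →
      (Matrix.of fun j1 j2 : Fin d => DDg (σ j1) (σ j2) x).det ≠ 0 := by
  have hproj (j : Fin n) : ∀ x ∈ M, ∃ p, IsOrthProjOnto (TangentAt n M x) (Pi.single j 1) p :=
    fun x hx => hM.exists_isOrthProjOnto one_le_two hx _
  have hDφ_eq (j : Fin n) : Set.EqOn (Dφ j) (fun x => Dg j x - Dh j x) M :=
    (hDφ j).eqOn_sub (hDg j) (hDh j) (hproj j)
      (fun x hx => hg.hasDifferentiableExtensionAt one_le_two hx)
      (fun x hx => hh.hasDifferentiableExtensionAt one_le_two hx)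
  have hDDφ_eq (j1 j2 : Fin n) :
      Set.EqOn (DDφ j1 j2) (fun x => DDg j1 j2 x - DDh j1 j2 x) M :=
    ((hDDφ j1 j2).congr (hDφ_eq j2)).eqOn_sub (hDDg j1 j2) (hDDh j1 j2) (hproj j1)
      (fun x hx => (hDg j2).hasDifferentiableExtensionAt hM le_rfl hg hx)
      (fun x hx => (hDh j2).hasDifferentiableExtensionAt hM le_rfl hh hx)
  have hpos : ∀ x ∈ C, 0 < (∑ j : Fin d, |Dg (σ j) x|) +
      |(Matrix.of fun j1 j2 : Fin d => DDg (σ j1) (σ j2) x).det| := by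
    intro x hx
    have := sum_abs_add_abs_det_sub_le (A := Matrix.of fun j1 j2 => DDh (σ j1) (σ j2) x)
      (B := Matrix.of fun j1 j2 => DDg (σ j1) (σ j2) x)
      (fun j => by simpa only [hDφ_eq (σ j) (hCM hx)] using (hd1 j x hx).le)
      (fun j1 j2 => (hLbound x hx j1 j2).le)
      (fun j1 j2 => by simpa only [of_apply, hDDφ_eq _ _ (hCM hx)] using (hd2 j1 j2 x hx).le)
    rw [Fintype.card_fin] at this
    linarith [hKbound x hx]
  refine ⟨hpos, fun x hx hcrit hdet => ?_⟩
  have hDg0 (j : Fin d) : Dg (σ j) x = 0 :=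
    (hDg (σ j)).eq_zero_of_isCriticalPt (hproj _ x (hCM hx)) hcrit
  simpa [hDg0, hdet] using hpos x hx

theorem statement11 (n d : ℕ) (M : Set (Fin n → ℝ)) (hM : IsCrSubmanifold 2 n d M)
    (σ : Fin d → Fin n) (hσ : StrictMono σ)
    (C G : Set (Fin n → ℝ)) (hCM : C ⊆ M) (hCcpt : IsCompact C)
    (hCG : C ⊆ G) (hGM : G ⊆ M) (hG : IsMVGraphPlain 2 n d σ G)
    (h g : (Fin n → ℝ) → ℝ) (hh : CrOn 2 M h) (hg : CrOn 2 M g)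
    (Dh : Fin n → (Fin n → ℝ) → ℝ) (hDh : ∀ j, IsDerivField n M h j (Dh j))
    (DDh : Fin n → Fin n → (Fin n → ℝ) → ℝ)
    (hDDh : ∀ j1 j2, IsDerivField n M (Dh j2) j1 (DDh j1 j2))
    (Dg : Fin n → (Fin n → ℝ) → ℝ) (hDg : ∀ j, IsDerivField n M g j (Dg j))
    (DDg : Fin n → Fin n → (Fin n → ℝ) → ℝ)
    (hDDg : ∀ j1 j2, IsDerivField n M (Dg j2) j1 (DDg j1 j2))
    (Dφ : Fin n → (Fin n → ℝ) → ℝ)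
    (hDφ : ∀ j, IsDerivField n M (fun x => g x - h x) j (Dφ j))
    (DDφ : Fin n → Fin n → (Fin n → ℝ) → ℝ)
    (hDDφ : ∀ j1 j2, IsDerivField n M (Dφ j2) j1 (DDφ j1 j2))
    (hnodeg : ∀ x ∈ C, IsCriticalPt n M h x →
      (Matrix.of fun j1 j2 : Fin d => DDh (σ j1) (σ j2) x).det ≠ 0)
    (K Lb ε : ℝ) (hK : 0 < K) (hLb : 0 < Lb) (hε : 0 < ε)
    (hKbound : ∀ x ∈ C,
      K < (∑ j : Fin d, |Dh (σ j) x|) +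
        |(Matrix.of fun j1 j2 : Fin d => DDh (σ j1) (σ j2) x).det|)
    (hLbound : ∀ x ∈ C, ∀ j1 j2 : Fin d, |DDh (σ j1) (σ j2) x| < Lb)
    (hεsmall : (d.factorial : ℝ) * ((Lb + ε) ^ d - Lb ^ d) + d * ε < K)
    (hd1 : ∀ j : Fin d, ∀ x ∈ C, |Dφ (σ j) x| < ε)
    (hd2 : ∀ j1 j2 : Fin d, ∀ x ∈ C, |DDφ (σ j1) (σ j2) x| < ε) :
    (∀ x ∈ C, 0 < (∑ j : Fin d, |Dg (σ j) x|) +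
        |(Matrix.of fun j1 j2 : Fin d => DDg (σ j1) (σ j2) x).det|) ∧
    ∀ x ∈ C, IsCriticalPt n M g x →
      (Matrix.of fun j1 j2 : Fin d => DDg (σ j1) (σ j2) x).det ≠ 0 :=
  statement11_general n d M hM σ C hCM h g hh hg Dh hDh DDh hDDh Dg hDg DDg hDDg Dφ hDφ DDφ hDDφ K
    Lb ε hKbound hLbound hεsmall hd1 hd2

end DMorse
end
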